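/- arXiv:2305.01100 — 4 statements merged into one kernel-verified Lean document; each statement's English description precedes it below -/
import Mathlib

section
/- Let n ≥ 2, let p satisfy 1 ≤ p ≤ n−1, and let s satisfy 0 ≤ s ≤ p−1. The number of p-element subsets A of the cyclic group ℤ/nℤ such that exactly s elements x of A satisfy x+1 ∈ A is (n/(p−s))·C(p−1, s)·C(n−p−1, p−1−s), where C(a,b) denotes the binomial coefficient (equal to 0 when b > a). -/
def adjC (B : Finset ℕ) : ℕ := (B.filter (fun x => x + 1 ∈ B)).card

lemma filter_succ_image (B : Finset ℕ) (c : ℕ) :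
    ((B.image (· + c)).filter fun x => x + 1 ∈ B.image (· + c)) =
      (B.filter fun x => x + 1 ∈ B).image (· + c) := by
  ext y
  simp only [Finset.mem_filter, Finset.mem_image]
  constructor
  · rintro ⟨⟨x, hx, rfl⟩, z, hz, hzx⟩
    have : z = x + 1 := by omega
    subst this
    exact ⟨x, ⟨hx, hz⟩, rfl⟩
  · rintro ⟨x, ⟨hx, hx1⟩, rfl⟩
    exact ⟨⟨x, hx, rfl⟩, x + 1, hx1, by omega⟩

lemma adjC_image (B : Finset ℕ) (c : ℕ) : adjC (B.image (· + c)) = adjC B := by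
  unfold adjC
  rw [filter_succ_image, Finset.card_image_of_injective _ (add_left_injective c)]

lemma card_image_add (B : Finset ℕ) (c : ℕ) : (B.image (· + c)).card = B.card :=
  Finset.card_image_of_injective _ (add_left_injective c)

lemma adjC_insert_zero_of_one_not_mem (B : Finset ℕ) (h0 : 0 ∉ B) (h1 : 1 ∉ B) :
    adjC (insert 0 B) = adjC B := by
  unfold adjC
  have : ((insert 0 B).filter fun x => x + 1 ∈ insert 0 B)
      = B.filter fun x => x + 1 ∈ B := by
    ext y
    simp only [Finset.mem_filter, Finset.mem_insert]
    constructor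
    · rintro ⟨hy | hy, h | h⟩
      · omega
      · subst hy; exact absurd h h1
      · omega
      · exact ⟨hy, h⟩
    · rintro ⟨hy, h⟩; exact ⟨Or.inr hy, Or.inr h⟩
  rw [this]

lemma adjC_insert_zero_of_one_mem (B : Finset ℕ) (h0 : 0 ∉ B) (h1 : 1 ∈ B) :
    adjC (insert 0 B) = adjC B + 1 := by
  unfold adjC
  have : ((insert 0 B).filter fun x => x + 1 ∈ insert 0 B)
      = insert 0 (B.filter fun x => x + 1 ∈ B) := by
    ext y
    simp only [Finset.mem_filter, Finset.mem_insert]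
    constructor
    · rintro ⟨hy | hy, h | h⟩
      · exact Or.inl hy
      · exact Or.inl hy
      · omega
      · exact Or.inr ⟨hy, h⟩
    · rintro (rfl | ⟨hy, h⟩)
      · exact ⟨Or.inl rfl, Or.inr h1⟩
      · exact ⟨Or.inr hy, Or.inr h⟩
  rw [this, Finset.card_insert_of_notMem (by simp only [Finset.mem_filter]; tauto)]

def HS (m p s : ℕ) : Finset (Finset ℕ) :=
  (Finset.range m).powerset.filter fun B => B.card = p ∧ adjC B = s

def FS (m p s : ℕ) : Finset (Finset ℕ) :=
  (Finset.range m).powerset.filter fun B => B.card = p ∧ adjC B = s ∧ 0 ∈ B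

lemma mem_HS {m p s : ℕ} {B : Finset ℕ} :
    B ∈ HS m p s ↔ B ⊆ Finset.range m ∧ B.card = p ∧ adjC B = s := by
  simp [HS, and_assoc]

lemma mem_FS {m p s : ℕ} {B : Finset ℕ} :
    B ∈ FS m p s ↔ B ⊆ Finset.range m ∧ B.card = p ∧ adjC B = s ∧ 0 ∈ B := by
  simp [FS, and_assoc]

lemma HS_filter_zero_mem (m p s : ℕ) :
    (HS m p s).filter (fun B => 0 ∈ B) = FS m p s := by
  ext B
  simp only [Finset.mem_filter, mem_HS, mem_FS]
  tauto

lemma pos_of_zero_not_mem {B : Finset ℕ} (h0 : 0 ∉ B) : ∀ x ∈ B, 1 ≤ x :=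
  fun x hx => Nat.pos_of_ne_zero (fun h => h0 (h ▸ hx))

lemma image_sub_add {B : Finset ℕ} (h0 : 0 ∉ B) : (B.image (· - 1)).image (· + 1) = B := by
  have pos := pos_of_zero_not_mem h0
  ext y
  simp only [Finset.mem_image]
  constructor
  · rintro ⟨x, ⟨z, hz, rfl⟩, rfl⟩
    have := pos z hz
    have hzz : z - 1 + 1 = z := by omega
    rw [hzz]; exact hz
  · intro hy
    have := pos y hy
    exact ⟨y - 1, ⟨y, hy, rfl⟩, by omega⟩

lemma HS_filter_zero_not_mem (m p s : ℕ) :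
    (HS m p s).filter (fun B => 0 ∉ B) = (HS (m - 1) p s).image (fun C => C.image (· + 1)) := by
  ext B
  simp only [Finset.mem_filter, mem_HS, Finset.mem_image]
  constructor
  · rintro ⟨⟨hsub, hcard, hadj⟩, h0⟩
    have pos := pos_of_zero_not_mem h0
    refine ⟨B.image (· - 1), ⟨?_, ?_, ?_⟩, image_sub_add h0⟩
    · intro y hy
      simp only [Finset.mem_image] at hy
      obtain ⟨x, hx, rfl⟩ := hy
      have := pos x hx
      have := Finset.mem_range.mp (hsub hx)
      exact Finset.mem_range.mpr (by omega)
    · rw [Finset.card_image_of_injOn, hcard]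
      intro a ha b hb hab
      have := pos a ha
      have := pos b hb
      simp only at hab
      omega
    · have := adjC_image (B.image (· - 1)) 1
      rw [image_sub_add h0] at this
      omega
  · rintro ⟨C, ⟨hsub, hcard, hadj⟩, rfl⟩
    refine ⟨⟨?_, ?_, ?_⟩, ?_⟩
    · intro y hy
      simp only [Finset.mem_image] at hy
      obtain ⟨x, hx, rfl⟩ := hy
      have := Finset.mem_range.mp (hsub hx)
      exact Finset.mem_range.mpr (by omega)
    · rw [card_image_add, hcard]
    · rw [adjC_image, hadj]
    · simp only [Finset.mem_image]
      rintro ⟨x, hx, h⟩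
      omega

lemma image_sub_add2 {B : Finset ℕ} (h2 : ∀ x ∈ B, 2 ≤ x) :
    (B.image (· - 2)).image (· + 2) = B := by
  ext y
  simp only [Finset.mem_image]
  constructor
  · rintro ⟨x, ⟨z, hz, rfl⟩, rfl⟩
    have := h2 z hz
    have hzz : z - 2 + 2 = z := by omega
    rw [hzz]; exact hz
  · intro hy
    have := h2 y hy
    exact ⟨y - 2, ⟨y, hy, rfl⟩, by omega⟩

lemma adjC_empty : adjC ∅ = 0 := by simp [adjC]

lemma adjC_range (m : ℕ) : adjC (Finset.range m) = m - 1 := by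
  unfold adjC
  have : (Finset.range m).filter (fun x => x + 1 ∈ Finset.range m) = Finset.range (m - 1) := by
    ext x
    simp only [Finset.mem_filter, Finset.mem_range]
    omega
  rw [this, Finset.card_range]

lemma FS_filter_one_not_mem (m p s : ℕ) (hp : 1 ≤ p) (hm : 1 ≤ m) :
    (FS m p s).filter (fun B => 1 ∉ B) =
      (HS (m - 2) (p - 1) s).image (fun C => insert 0 (C.image (· + 2))) := by
  ext B
  simp only [Finset.mem_filter, mem_FS, mem_HS, Finset.mem_image]
  constructor
  · rintro ⟨⟨hsub, hcard, hadj, h0⟩, h1⟩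
    have h2 : ∀ x ∈ B.erase 0, 2 ≤ x := by
      intro x hx
      have hne := Finset.ne_of_mem_erase hx
      have hxB := Finset.mem_of_mem_erase hx
      have : x ≠ 1 := fun h => h1 (h ▸ hxB)
      omega
    have hrec : ((B.erase 0).image (· - 2)).image (· + 2) = B.erase 0 := image_sub_add2 h2
    refine ⟨(B.erase 0).image (· - 2), ⟨?_, ?_, ?_⟩, ?_⟩
    · intro y hy
      simp only [Finset.mem_image] at hy
      obtain ⟨x, hx, rfl⟩ := hy
      have := h2 x hx
      have := Finset.mem_range.mp (hsub (Finset.mem_of_mem_erase hx))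
      exact Finset.mem_range.mpr (by omega)
    · rw [Finset.card_image_of_injOn, Finset.card_erase_of_mem h0, hcard]
      intro a ha b hb hab
      have := h2 a ha
      have := h2 b hb
      simp only at hab
      omega
    · have e1 := adjC_image ((B.erase 0).image (· - 2)) 2
      rw [hrec] at e1
      have e2 : adjC (insert 0 (B.erase 0)) = adjC (B.erase 0) :=
        adjC_insert_zero_of_one_not_mem _ (Finset.notMem_erase 0 B)
          (fun h => h1 (Finset.mem_of_mem_erase h))
      rw [Finset.insert_erase h0] at e2
      omega
    · rw [hrec, Finset.insert_erase h0]
  · rintro ⟨C, ⟨hsub, hcard, hadj⟩, rfl⟩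
    have h0im : (0 : ℕ) ∉ C.image (· + 2) := by
      simp only [Finset.mem_image]; rintro ⟨x, hx, h⟩; omega
    have h1im : (1 : ℕ) ∉ C.image (· + 2) := by
      simp only [Finset.mem_image]; rintro ⟨x, hx, h⟩; omega
    refine ⟨⟨?_, ?_, ?_, Finset.mem_insert_self 0 _⟩, ?_⟩
    · intro y hy
      rcases Finset.mem_insert.mp hy with rfl | hy
      · exact Finset.mem_range.mpr (by omega)
      · simp only [Finset.mem_image] at hy
        obtain ⟨x, hx, rfl⟩ := hy
        have := Finset.mem_range.mp (hsub hx)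
        exact Finset.mem_range.mpr (by omega)
    · rw [Finset.card_insert_of_notMem h0im, card_image_add, hcard]
      omega
    · rw [adjC_insert_zero_of_one_not_mem _ h0im h1im, adjC_image, hadj]
    · simp only [Finset.mem_insert]
      rintro (h | h)
      · omega
      · exact h1im (by simpa using h)

lemma FS_filter_one_mem (m p s : ℕ) (hp : 1 ≤ p) (hs : 1 ≤ s) (hm : 1 ≤ m) :
    (FS m p s).filter (fun B => 1 ∈ B) =
      (FS (m - 1) (p - 1) (s - 1)).image (fun C => insert 0 (C.image (· + 1))) := by
  ext B
  simp only [Finset.mem_filter, mem_FS, Finset.mem_image]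
  constructor
  · rintro ⟨⟨hsub, hcard, hadj, h0⟩, h1⟩
    have h2 : ∀ x ∈ B.erase 0, 1 ≤ x := by
      intro x hx
      have hne := Finset.ne_of_mem_erase hx
      omega
    have h0e : (0:ℕ) ∉ B.erase 0 := Finset.notMem_erase 0 B
    have hrec : ((B.erase 0).image (· - 1)).image (· + 1) = B.erase 0 := image_sub_add h0e
    refine ⟨(B.erase 0).image (· - 1), ⟨?_, ?_, ?_, ?_⟩, ?_⟩
    · intro y hy
      simp only [Finset.mem_image] at hy
      obtain ⟨x, hx, rfl⟩ := hy
      have := h2 x hx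
      have := Finset.mem_range.mp (hsub (Finset.mem_of_mem_erase hx))
      exact Finset.mem_range.mpr (by omega)
    · rw [Finset.card_image_of_injOn, Finset.card_erase_of_mem h0, hcard]
      intro a ha b hb hab
      have := h2 a ha
      have := h2 b hb
      simp only at hab
      omega
    · have e1 := adjC_image ((B.erase 0).image (· - 1)) 1
      rw [hrec] at e1
      have h1e : (1:ℕ) ∈ B.erase 0 := Finset.mem_erase.mpr ⟨one_ne_zero, h1⟩
      have e2 : adjC (insert 0 (B.erase 0)) = adjC (B.erase 0) + 1 :=
        adjC_insert_zero_of_one_mem _ h0e h1e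
      rw [Finset.insert_erase h0] at e2
      omega
    · simp only [Finset.mem_image]
      exact ⟨1, Finset.mem_erase.mpr ⟨one_ne_zero, h1⟩, rfl⟩
    · rw [hrec, Finset.insert_erase h0]
  · rintro ⟨C, ⟨hsub, hcard, hadj, h0C⟩, rfl⟩
    have h0im : (0 : ℕ) ∉ C.image (· + 1) := by
      simp only [Finset.mem_image]; rintro ⟨x, hx, h⟩; omega
    have h1im : (1 : ℕ) ∈ C.image (· + 1) := by
      simp only [Finset.mem_image]; exact ⟨0, h0C, rfl⟩
    refine ⟨⟨?_, ?_, ?_, Finset.mem_insert_self 0 _⟩, Finset.mem_insert_of_mem h1im⟩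
    · intro y hy
      rcases Finset.mem_insert.mp hy with rfl | hy
      · exact Finset.mem_range.mpr (by omega)
      · simp only [Finset.mem_image] at hy
        obtain ⟨x, hx, rfl⟩ := hy
        have := Finset.mem_range.mp (hsub hx)
        exact Finset.mem_range.mpr (by omega)
    · rw [Finset.card_insert_of_notMem h0im, card_image_add, hcard]
      omega
    · rw [adjC_insert_zero_of_one_mem _ h0im h1im, adjC_image, hadj]
      omega

lemma FS_filter_one_mem_zero (m p : ℕ) :
    (FS m p 0).filter (fun B => 1 ∈ B) = ∅ := by
  rw [Finset.eq_empty_iff_forall_notMem]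
  intro B hB
  rw [Finset.mem_filter, mem_FS] at hB
  obtain ⟨⟨_, _, hadj, h0⟩, h1⟩ := hB
  have : (0:ℕ) ∈ B.filter (fun x => x + 1 ∈ B) := Finset.mem_filter.mpr ⟨h0, by simpa using h1⟩
  have := Finset.card_ne_zero_of_mem this
  exact this hadj

lemma inj_insert_image (c : ℕ) (hc : 1 ≤ c) :
    Function.Injective (fun C : Finset ℕ => insert 0 (C.image (· + c))) := by
  intro C D h
  simp only at h
  have h0C : (0:ℕ) ∉ C.image (· + c) := by
    simp only [Finset.mem_image]; rintro ⟨x, hx, hh⟩; omega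
  have h0D : (0:ℕ) ∉ D.image (· + c) := by
    simp only [Finset.mem_image]; rintro ⟨x, hx, hh⟩; omega
  have : C.image (· + c) = D.image (· + c) := by
    rw [← Finset.erase_insert h0C, ← Finset.erase_insert h0D, h]
  exact Finset.image_injective (add_left_injective c) this

lemma HS_card_zero (m s : ℕ) : (HS m 0 s).card = if s = 0 then 1 else 0 := by
  have : HS m 0 s = if s = 0 then {∅} else ∅ := by
    ext B
    rw [mem_HS]
    split_ifs with h
    · subst h
      simp only [Finset.mem_singleton]
      constructor
      · rintro ⟨_, hc, _⟩; exact Finset.card_eq_zero.mp hc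
      · rintro rfl; exact ⟨Finset.empty_subset _, rfl, adjC_empty⟩
    · simp only [Finset.notMem_empty, iff_false]
      rintro ⟨_, hc, hadj⟩
      rw [Finset.card_eq_zero.mp hc] at hadj
      rw [adjC_empty] at hadj
      exact h hadj.symm
  rw [this]; split_ifs <;> simp

lemma HS_card_top (m s : ℕ) : (HS m m s).card = if s = m - 1 then 1 else 0 := by
  have : HS m m s = if s = m - 1 then {Finset.range m} else ∅ := by
    ext B
    rw [mem_HS]
    have key : B ⊆ Finset.range m ∧ B.card = m ∧ adjC B = s ↔ B = Finset.range m ∧ s = m - 1 := by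
      constructor
      · rintro ⟨hsub, hcard, hadj⟩
        have : B = Finset.range m :=
          Finset.eq_of_subset_of_card_le hsub (by rw [Finset.card_range, hcard])
        subst this
        rw [adjC_range] at hadj
        exact ⟨rfl, hadj.symm⟩
      · rintro ⟨rfl, rfl⟩
        exact ⟨le_refl _, Finset.card_range m, adjC_range m⟩
    rw [key]
    split_ifs with h
    · simp [h]
    · simp only [Finset.notMem_empty, iff_false]
      tauto
  rw [this]; split_ifs <;> simp

lemma FS_card_one (m s : ℕ) (hm : 1 ≤ m) : (FS m 1 s).card = if s = 0 then 1 else 0 := by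
  have adj0 : adjC {0} = 0 := by simp [adjC]
  have : FS m 1 s = if s = 0 then {({0} : Finset ℕ)} else ∅ := by
    ext B
    rw [mem_FS]
    have key : B ⊆ Finset.range m ∧ B.card = 1 ∧ adjC B = s ∧ 0 ∈ B ↔ B = {0} ∧ s = 0 := by
      constructor
      · rintro ⟨hsub, hcard, hadj, h0⟩
        obtain ⟨a, ha⟩ := Finset.card_eq_one.mp hcard
        subst ha
        rcases Finset.mem_singleton.mp h0 with rfl
        rw [adj0] at hadj
        exact ⟨rfl, hadj.symm⟩
      · rintro ⟨rfl, rfl⟩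
        refine ⟨?_, rfl, adj0, Finset.mem_singleton_self 0⟩
        intro x hx
        rcases Finset.mem_singleton.mp hx with rfl
        exact Finset.mem_range.mpr (by omega)
    rw [key]
    split_ifs with h
    · simp [h]
    · simp only [Finset.notMem_empty, iff_false]
      tauto
  rw [this]; split_ifs <;> simp

lemma FS_card_top (m s : ℕ) (hm : 1 ≤ m) : (FS m m s).card = if s = m - 1 then 1 else 0 := by
  have : FS m m s = if s = m - 1 then {Finset.range m} else ∅ := by
    ext B
    rw [mem_FS]
    have key : B ⊆ Finset.range m ∧ B.card = m ∧ adjC B = s ∧ 0 ∈ B ↔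
        B = Finset.range m ∧ s = m - 1 := by
      constructor
      · rintro ⟨hsub, hcard, hadj, _⟩
        have : B = Finset.range m :=
          Finset.eq_of_subset_of_card_le hsub (by rw [Finset.card_range, hcard])
        subst this
        rw [adjC_range] at hadj
        exact ⟨rfl, hadj.symm⟩
      · rintro ⟨rfl, rfl⟩
        exact ⟨le_refl _, Finset.card_range m, adjC_range m, Finset.mem_range.mpr (by omega)⟩
    rw [key]
    split_ifs with h
    · simp [h]
    · simp only [Finset.notMem_empty, iff_false]
      tauto
  rw [this]; split_ifs <;> simp

lemma main_counts : ∀ m : ℕ,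
    (∀ p s, p ≤ m → (HS m p s).card = (p - 1).choose s * (m - p + 1).choose (p - s)) ∧
    (∀ p s, 1 ≤ p → p ≤ m → (FS m p s).card = (p - 1).choose s * (m - p).choose (p - 1 - s)) := by
  intro m
  induction m using Nat.strong_induction_on with
  | _ m ih =>
  have fs : ∀ p s, 1 ≤ p → p ≤ m → (FS m p s).card =
      (p - 1).choose s * (m - p).choose (p - 1 - s) := by
    intro p s hp hpm
    have hm : 1 ≤ m := le_trans hp hpm
    by_cases hp1 : p = 1
    · subst hp1
      rw [FS_card_one m s hm]
      split_ifs with h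
      · subst h; simp
      · rw [show (1:ℕ) - 1 = 0 from rfl, Nat.choose_eq_zero_of_lt (by omega : 0 < s)]
        ring
    by_cases hptop : p = m
    · subst hptop
      rw [FS_card_top p s hm, Nat.sub_self]
      rcases Nat.lt_trichotomy s (p - 1) with h | h | h
      · rw [if_neg (by omega), Nat.choose_eq_zero_of_lt (by omega : 0 < p - 1 - s)]
        ring
      · rw [if_pos h, h, Nat.choose_self, Nat.sub_self, Nat.choose_self]
      · rw [if_neg (by omega), Nat.choose_eq_zero_of_lt (by omega : p - 1 < s)]
        ring
    -- now 2 ≤ p < m, so m ≥ 3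
    have hp2 : 2 ≤ p := by omega
    have hpm' : p < m := by omega
    have hm3 : 3 ≤ m := by omega
    have split := Finset.card_filter_add_card_filter_not
      (s := FS m p s) (p := fun B => 1 ∈ B)
    have hBc : ((FS m p s).filter (fun B => ¬ 1 ∈ B)).card =
        (p - 2).choose s * ((m - p)).choose (p - 1 - s) := by
      have e : ((FS m p s).filter (fun B => ¬ 1 ∈ B)) =
          (HS (m - 2) (p - 1) s).image (fun C => insert 0 (C.image (· + 2))) :=
        FS_filter_one_not_mem m p s hp hm
      rw [e, Finset.card_image_of_injective _ (inj_insert_image 2 (by omega))]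
      rw [(ih (m - 2) (by omega)).1 (p - 1) s (by omega),
        show p - 1 - 1 = p - 2 from by omega,
        show m - 2 - (p - 1) + 1 = m - p from by omega]
    by_cases hs0 : s = 0
    · subst hs0
      rw [← split, FS_filter_one_mem_zero, Finset.card_empty, Nat.zero_add, hBc]
      simp
    · have hs1 : 1 ≤ s := by omega
      have hA : ((FS m p s).filter (fun B => 1 ∈ B)).card =
          (p - 2).choose (s - 1) * ((m - p)).choose (p - 1 - s) := by
        rw [FS_filter_one_mem m p s hp hs1 hm,
          Finset.card_image_of_injective _ (inj_insert_image 1 (by omega)),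
          (ih (m - 1) (by omega)).2 (p - 1) (s - 1) (by omega) (by omega),
          show p - 1 - 1 = p - 2 from by omega,
          show m - 1 - (p - 1) = m - p from by omega,
          show p - 2 - (s - 1) = p - 1 - s from by omega]
      have pascal : (p - 1).choose s = (p - 2).choose (s - 1) + (p - 2).choose s := by
        obtain ⟨a, rfl⟩ : ∃ a, s = a + 1 := ⟨s - 1, by omega⟩
        obtain ⟨b, rfl⟩ : ∃ b, p = b + 2 := ⟨p - 2, by omega⟩
        rw [show b + 2 - 1 = b + 1 from by omega, show b + 2 - 2 = b from by omega,
          show a + 1 - 1 = a from by omega, Nat.choose_succ_succ]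
      rw [← split, hA, hBc, pascal, add_mul]
  have hsarr : ∀ p s, p ≤ m → (HS m p s).card =
      (p - 1).choose s * (m - p + 1).choose (p - s) := by
    intro p s hpm
    by_cases hp0 : p = 0
    · subst hp0
      rw [HS_card_zero]
      split_ifs with h
      · subst h; simp
      · rw [show (0:ℕ) - 1 = 0 from rfl, Nat.choose_eq_zero_of_lt (by omega : 0 < s)]
        ring
    have hp : 1 ≤ p := by omega
    by_cases hptop : p = m
    · subst hptop
      rw [HS_card_top, Nat.sub_self]
      rcases Nat.lt_trichotomy s (p - 1) with h | h | h
      · rw [if_neg (by omega), Nat.choose_eq_zero_of_lt (by omega : 1 < p - s)]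
        ring
      · rw [if_pos h, h, Nat.choose_self, show p - (p - 1) = 1 by omega, Nat.choose_self]
      · rw [if_neg (by omega), Nat.choose_eq_zero_of_lt (by omega : p - 1 < s)]
        ring
    have hpm' : p < m := by omega
    have split := Finset.card_filter_add_card_filter_not
      (s := HS m p s) (p := fun B => 0 ∈ B)
    have h1 : ((HS m p s).filter (fun B => 0 ∈ B)).card =
        (p - 1).choose s * (m - p).choose (p - 1 - s) := by
      rw [HS_filter_zero_mem, fs p s hp hpm]
    have h2 : ((HS m p s).filter (fun B => ¬ 0 ∈ B)).card =
        (p - 1).choose s * (m - p).choose (p - s) := by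
      have e : ((HS m p s).filter (fun B => ¬ 0 ∈ B)) =
          (HS (m - 1) p s).image (fun C => C.image (· + 1)) :=
        HS_filter_zero_not_mem m p s
      rw [e, Finset.card_image_of_injective _
        (Finset.image_injective (add_left_injective 1)),
        (ih (m - 1) (by omega)).1 p s (by omega),
        show m - 1 - p + 1 = m - p from by omega]
    by_cases hsp : s < p
    · have pascal : (m - p + 1).choose (p - s) =
          (m - p).choose (p - 1 - s) + (m - p).choose (p - s) := by
        obtain ⟨c, hc⟩ : ∃ c, p - s = c + 1 := ⟨p - s - 1, by omega⟩
        rw [hc, show p - 1 - s = c from by omega, Nat.choose_succ_succ]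
      rw [← split, h1, h2, pascal, Nat.mul_add]
    · have hz : (p - 1).choose s = 0 := Nat.choose_eq_zero_of_lt (by omega)
      rw [← split, h1, h2, hz]
      simp
  exact ⟨hsarr, fs⟩

section ZModPart

variable {n : ℕ} [NeZero n]

def adjZ (A : Finset (ZMod n)) : ℕ := (A.filter fun x => x + 1 ∈ A).card

lemma cast_val_eq_self (a : ZMod n) : ((a.val : ℕ) : ZMod n) = a :=
  ZMod.natCast_rightInverse a

lemma cast_n_sub_one : ((n - 1 : ℕ) : ZMod n) = -1 := by
  have h1 : 1 ≤ n := Nat.pos_of_ne_zero (NeZero.ne n)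
  rw [Nat.cast_sub h1, ZMod.natCast_self]
  simp

lemma zmod_val_add_one {c : ZMod n} (h : c.val < n - 1) : (c + 1).val = c.val + 1 := by
  have h1 : 1 ≤ n := Nat.pos_of_ne_zero (NeZero.ne n)
  have hc : ((c.val + 1 : ℕ) : ZMod n) = c + 1 := by
    rw [Nat.cast_add, Nat.cast_one, cast_val_eq_self]
  rw [← hc, ZMod.val_cast_of_lt (by omega)]

def phiB (x : ZMod n) (A : Finset (ZMod n)) : Finset ℕ := A.image (fun a => (a - x).val)

lemma val_sub_ne {x a : ZMod n} {A : Finset (ZMod n)} (hx1 : x - 1 ∉ A) (ha : a ∈ A) :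
    (a - x).val ≠ n - 1 := by
  intro h
  have : a - x = -1 := by
    rw [← cast_val_eq_self (a - x), h, cast_n_sub_one]
  have haeq : a = x - 1 := by
    have := congrArg (· + x) this
    rw [sub_add_cancel] at this
    rw [this]; ring
  exact hx1 (haeq ▸ ha)

lemma phiB_subset {x : ZMod n} {A : Finset (ZMod n)} (hx1 : x - 1 ∉ A) :
    phiB x A ⊆ Finset.range (n - 1) := by
  intro b hb
  obtain ⟨a, ha, rfl⟩ := Finset.mem_image.mp hb
  have hlt : (a - x).val < n := ZMod.val_lt _
  have hne := val_sub_ne hx1 ha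
  exact Finset.mem_range.mpr (by omega)

lemma phiB_injOn (x : ZMod n) (A : Finset (ZMod n)) :
    Set.InjOn (fun a => (a - x).val) A := by
  intro a _ b _ h
  simp only at h
  have : a - x = b - x := by
    rw [← cast_val_eq_self (a - x), ← cast_val_eq_self (b - x), h]
  exact sub_left_injective this

lemma phiB_card (x : ZMod n) (A : Finset (ZMod n)) : (phiB x A).card = A.card :=
  Finset.card_image_of_injOn (phiB_injOn x A)

lemma phiB_recon (x : ZMod n) (A : Finset (ZMod n)) :
    (phiB x A).image (fun b : ℕ => x + (b : ZMod n)) = A := by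
  ext a
  simp only [phiB, Finset.mem_image]
  constructor
  · rintro ⟨b, ⟨a', ha', rfl⟩, rfl⟩
    rwa [cast_val_eq_self, add_sub_cancel]
  · intro ha
    exact ⟨(a - x).val, ⟨a, ha, rfl⟩, by rw [cast_val_eq_self]; ring⟩

lemma phiB_adj {x : ZMod n} {A : Finset (ZMod n)} (hx1 : x - 1 ∉ A) :
    adjC (phiB x A) = adjZ A := by
  have key : (phiB x A).filter (fun b => b + 1 ∈ phiB x A) =
      (A.filter fun a => a + 1 ∈ A).image (fun a => (a - x).val) := by
    ext b
    simp only [phiB, Finset.mem_filter, Finset.mem_image]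
    constructor
    · rintro ⟨⟨a, ha, rfl⟩, a', ha', hval⟩
      have hcast : a' - x = (a - x) + 1 := by
        rw [← cast_val_eq_self (a' - x), hval, Nat.cast_add, Nat.cast_one, cast_val_eq_self]
      have ha'' : a' = a + 1 := by
        have := congrArg (· + x) hcast
        rw [sub_add_cancel] at this
        rw [this]; ring
      exact ⟨a, ⟨ha, ha'' ▸ ha'⟩, rfl⟩
    · rintro ⟨a, ⟨ha, ha1⟩, rfl⟩
      refine ⟨⟨a, ha, rfl⟩, a + 1, ha1, ?_⟩
      have h1 : a + 1 - x = (a - x) + 1 := by ring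
      have hne := val_sub_ne hx1 ha
      have hlt : (a - x).val < n := ZMod.val_lt _
      rw [h1, zmod_val_add_one (by omega)]
  unfold adjC adjZ
  rw [key, Finset.card_image_of_injOn ((phiB_injOn x A).mono (by
    intro a ha
    exact (Finset.mem_filter.mp ha).1))]

lemma phiB_recon2 {x : ZMod n} {B : Finset ℕ} (hB : B ⊆ Finset.range n) :
    phiB x (B.image (fun b : ℕ => x + (b : ZMod n))) = B := by
  ext b
  simp only [phiB, Finset.mem_image]
  constructor
  · rintro ⟨a, ⟨b', hb', rfl⟩, rfl⟩
    rw [add_sub_cancel_left, ZMod.val_cast_of_lt (Finset.mem_range.mp (hB hb'))]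
    exact hb'
  · intro hb
    refine ⟨x + (b : ZMod n), ⟨b, hb, rfl⟩, ?_⟩
    rw [add_sub_cancel_left, ZMod.val_cast_of_lt (Finset.mem_range.mp (hB hb))]

lemma card_image_cast {x : ZMod n} {B : Finset ℕ} (hB : B ⊆ Finset.range n) :
    (B.image (fun b : ℕ => x + (b : ZMod n))).card = B.card := by
  apply Finset.card_image_of_injOn
  intro a ha b hb h
  simp only at h
  have : ((a : ℕ) : ZMod n) = (b : ZMod n) := by
    have := add_left_cancel h
    exact this
  rw [← ZMod.val_cast_of_lt (Finset.mem_range.mp (hB ha)),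
    ← ZMod.val_cast_of_lt (Finset.mem_range.mp (hB hb)), this]

end ZModPart

/-!
STATEMENT 6: Let n ≥ 2, 1 ≤ p ≤ n−1, and 0 ≤ s ≤ p−1.  The number of p-element subsets
A of ℤ/nℤ such that exactly s elements x of A satisfy x+1 ∈ A is
(n/(p−s))·C(p−1,s)·C(n−p−1,p−1−s).
-/

theorem count_cyclic_subsets_by_adjacencies (n p s : ℕ) (hn : 2 ≤ n)
    (hp1 : 1 ≤ p) (hp2 : p ≤ n - 1) (hs : s ≤ p - 1) :
    (Nat.card {A : Finset (ZMod n) //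
        A.card = p ∧ (A.filter fun x => x + 1 ∈ A).card = s} : ℚ) =
      (n : ℚ) / (p - s) * ((p - 1).choose s) * ((n - p - 1).choose (p - 1 - s)) := by
  haveI : NeZero n := ⟨by omega⟩
  classical
  set T : Finset (Finset (ZMod n)) :=
    Finset.univ.filter (fun A => A.card = p ∧ (A.filter fun x => x + 1 ∈ A).card = s) with hT
  have hN : Nat.card {A : Finset (ZMod n) //
      A.card = p ∧ (A.filter fun x => x + 1 ∈ A).card = s} = T.card := by
    rw [Nat.card_eq_fintype_card, Fintype.card_subtype]
  set S : Finset (ZMod n × Finset (ZMod n)) :=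
    T.biUnion (fun A => (A.filter fun x => x - 1 ∉ A).image (fun x => (x, A))) with hS
  have mem_T : ∀ A : Finset (ZMod n), A ∈ T ↔ A.card = p ∧ adjZ A = s := by
    intro A
    rw [hT, Finset.mem_filter]
    exact ⟨fun h => h.2, fun h => ⟨Finset.mem_univ A, h⟩⟩
  have mem_S : ∀ q : ZMod n × Finset (ZMod n),
      q ∈ S ↔ q.2.card = p ∧ adjZ q.2 = s ∧ q.1 ∈ q.2 ∧ q.1 - 1 ∉ q.2 := by
    intro q
    rw [hS, Finset.mem_biUnion]
    constructor
    · rintro ⟨A, hA, hq⟩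
      obtain ⟨x, hx, rfl⟩ := Finset.mem_image.mp hq
      obtain ⟨hx1, hx2⟩ := Finset.mem_filter.mp hx
      obtain ⟨hc, ha⟩ := (mem_T A).mp hA
      exact ⟨hc, ha, hx1, hx2⟩
    · rintro ⟨hc, ha, hx1, hx2⟩
      exact ⟨q.2, (mem_T q.2).mpr ⟨hc, ha⟩,
        Finset.mem_image.mpr ⟨q.1, Finset.mem_filter.mpr ⟨hx1, hx2⟩, rfl⟩⟩
  have key1 : S.card = T.card * (p - s) := by
    rw [hS, Finset.card_biUnion]
    · rw [Finset.sum_congr rfl (fun A hA => ?_), Finset.sum_const, smul_eq_mul]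
      obtain ⟨hc, ha⟩ := (mem_T A).mp hA
      rw [Finset.card_image_of_injOn (fun a _ b _ h => congrArg Prod.fst h)]
      have e : (A.filter fun x => x + 1 ∈ A).image (· + 1) = A.filter (fun x => x - 1 ∈ A) := by
        ext y
        simp only [Finset.mem_image, Finset.mem_filter]
        constructor
        · rintro ⟨x, ⟨hx, hx1⟩, rfl⟩
          exact ⟨hx1, by rwa [add_sub_cancel_right]⟩
        · rintro ⟨hy, hy1⟩
          exact ⟨y - 1, ⟨hy1, by rwa [sub_add_cancel]⟩, by rw [sub_add_cancel]⟩
      have h1 : (A.filter fun x => x - 1 ∈ A).card = s := by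
        rw [← e, Finset.card_image_of_injective _ (add_left_injective (1 : ZMod n))]
        exact ha
      have h2 := Finset.card_filter_add_card_filter_not
        (s := A) (p := fun x => x - 1 ∈ A)
      omega
    · intro A hA B hB hAB
      rw [Function.onFun, Finset.disjoint_left]
      rintro q hqA hqB
      obtain ⟨x, _, rfl⟩ := Finset.mem_image.mp hqA
      obtain ⟨y, _, hy⟩ := Finset.mem_image.mp hqB
      exact hAB (congrArg Prod.snd hy).symm
  have key2 : S.card = n * (FS (n - 1) p s).card := by
    have hcard : S.card = ((Finset.univ : Finset (ZMod n)) ×ˢ FS (n - 1) p s).card := by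
      apply Finset.card_bij (fun q _ => (q.1, phiB q.1 q.2))
      · intro q hq
        obtain ⟨hc, ha, hx1, hx2⟩ := (mem_S q).mp hq
        rw [Finset.mem_product]
        refine ⟨Finset.mem_univ _, mem_FS.mpr ⟨phiB_subset hx2, ?_, ?_, ?_⟩⟩
        · rw [phiB_card, hc]
        · rw [phiB_adj hx2, ha]
        · exact Finset.mem_image.mpr ⟨q.1, hx1, by simp⟩
      · intro q hq q' hq' h
        simp only [Prod.mk.injEq] at h
        obtain ⟨h1, h2⟩ := h
        rw [← h1] at h2
        have := congrArg (Finset.image (fun b : ℕ => q.1 + (b : ZMod n))) h2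
        rw [phiB_recon, phiB_recon] at this
        exact Prod.ext h1 this
      · intro b hb
        rw [Finset.mem_product] at hb
        obtain ⟨hB1, hB2⟩ := hb
        obtain ⟨hsub, hcard, hadj, h0B⟩ := mem_FS.mp hB2
        have hBn : b.2 ⊆ Finset.range n :=
          hsub.trans (Finset.range_subset_range.mpr (by omega))
        refine ⟨(b.1, b.2.image (fun c : ℕ => b.1 + (c : ZMod n))), ?_, ?_⟩
        · rw [mem_S]
          have hx1 : b.1 ∈ b.2.image (fun c : ℕ => b.1 + (c : ZMod n)) :=
            Finset.mem_image.mpr ⟨0, h0B, by simp⟩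
          have hx2 : b.1 - 1 ∉ b.2.image (fun c : ℕ => b.1 + (c : ZMod n)) := by
            rintro h
            obtain ⟨c, hc, hxc⟩ := Finset.mem_image.mp h
            have : ((c + 1 : ℕ) : ZMod n) = 0 := by
              push_cast
              have : (c : ZMod n) = -1 := by
                have := congrArg (· - b.1) hxc
                rw [add_sub_cancel_left] at this
                rw [this]; ring
              rw [this]; ring
            have hdvd : n ∣ c + 1 := (CharP.cast_eq_zero_iff (ZMod n) n (c + 1)).mp this
            have := Finset.mem_range.mp (hsub hc)
            have := Nat.le_of_dvd (by omega) hdvd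
            omega
          refine ⟨?_, ?_, hx1, hx2⟩
          · rw [card_image_cast hBn, hcard]
          · have := phiB_adj (A := b.2.image (fun c : ℕ => b.1 + (c : ZMod n))) hx2
            rw [phiB_recon2 hBn] at this
            rw [← this, hadj]
        · have h := phiB_recon2 (x := b.1) hBn
          simp only [h]
    rw [hcard, Finset.card_product, Finset.card_univ, ZMod.card]
  have hF : (FS (n - 1) p s).card =
      (p - 1).choose s * (n - 1 - p).choose (p - 1 - s) :=
    (main_counts (n - 1)).2 p s hp1 hp2
  have keyN : T.card * (p - s) = n * ((p - 1).choose s * (n - 1 - p).choose (p - 1 - s)) := by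
    rw [← key1, key2, hF]
  rw [hN]
  have hsp : s < p := by omega
  have hQ : (T.card : ℚ) * ((p : ℚ) - s) =
      (n : ℚ) * ((p - 1).choose s : ℚ) * ((n - 1 - p).choose (p - 1 - s) : ℚ) := by
    have h2 : ((T.card * (p - s) : ℕ) : ℚ) =
        ((n * ((p - 1).choose s * (n - 1 - p).choose (p - 1 - s)) : ℕ) : ℚ) := by
      exact_mod_cast congrArg (fun k : ℕ => (k : ℚ)) keyN
    push_cast [Nat.cast_sub hsp.le] at h2
    linarith
  have hne : ((p : ℚ) - s) ≠ 0 := by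
    have : (s : ℚ) < p := by exact_mod_cast hsp
    linarith
  rw [show n - p - 1 = n - 1 - p from by omega]
  rw [div_mul_eq_mul_div, div_mul_eq_mul_div, eq_div_iff hne]
  linear_combination hQ
end

section
/- For integers n ≥ 1 and any set partition α of {1,…,n} with k blocks, the integer n + 1 − k − f(α) is nonnegative and even, where f(α) is the number of cycles of σ∘τ⁻¹. In particular the genus g(α) is a nonnegative integer satisfying 2·g(α) ≤ n − k. -/
/-!
STATEMENT 8: For n ≥ 1 and any set partition α of {1,…,n} with k blocks, the integer
n + 1 − k − f(α) is nonnegative and even; in particular the genus g(α) is a nonnegative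
integer with 2·g(α) ≤ n − k.
-/

open Finset

variable {n : ℕ}

/-- The increasing cycle on a block `b`, as a permutation of `Fin n`. -/
def blockPerm (b : Finset (Fin n)) : Equiv.Perm (Fin n) :=
  (b.sort (· ≤ ·)).formPerm

/-- The permutation `τ` associated to a set partition: the product of the increasing
cycles on the blocks. -/
def partPerm (P : Finpartition (univ : Finset (Fin n))) : Equiv.Perm (Fin n) :=
  P.parts.noncommProd blockPerm (by
    intro a ha b hb hab
    have hd : Disjoint a b := P.disjoint ha hb hab
    apply Equiv.Perm.Disjoint.commute
    intro x
    by_cases hx : x ∈ a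
    · right
      apply List.formPerm_apply_of_notMem
      rw [Finset.mem_sort]
      exact fun hxb => Finset.disjoint_left.mp hd hx hxb
    · left
      apply List.formPerm_apply_of_notMem
      rw [Finset.mem_sort]
      exact hx)

/-- The number of cycles of a permutation, counting fixed points as cycles of length 1. -/
def cycleCount (π : Equiv.Perm (Fin n)) : ℕ :=
  π.cycleType.card + (univ.filter fun x => π x = x).card

/-- `f(α)`: the number of cycles of `σ ∘ τ⁻¹`, where `σ = (1,2,…,n)`. -/
def partFaces (P : Finpartition (univ : Finset (Fin n))) : ℕ :=
  cycleCount (finRotate n * (partPerm P)⁻¹)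

/-- The genus of the set partition `P` equals `g`, i.e. `2g = n + 1 - k - f(α)` where
`k` is the number of blocks. -/
def HasGenus (P : Finpartition (univ : Finset (Fin n))) (g : ℕ) : Prop :=
  n + 1 = P.parts.card + partFaces P + 2 * g


namespace GenusAux

open Equiv Equiv.Perm Function

variable {n : ℕ}

/-- The same-cycle setoid of a permutation. -/
def scS (π : Equiv.Perm (Fin n)) : Setoid (Fin n) :=
  ⟨π.SameCycle, ⟨fun x => Equiv.Perm.SameCycle.refl π x, fun h => h.symm, fun h h' => h.trans h'⟩⟩

/-- Number of cycles (orbits) of a permutation. -/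
noncomputable def d (π : Equiv.Perm (Fin n)) : ℕ := Nat.card (Quotient (scS π))

lemma sameCycle_ind {π : Equiv.Perm (Fin n)} {r : Fin n → Fin n → Prop}
    (he : Equivalence r) (hstep : ∀ x, r x (π x)) {x y : Fin n} (h : π.SameCycle x y) :
    r x y := by
  have key : ∀ (k : ℕ) (x : Fin n), r x ((π ^ k) x) := by
    intro k
    induction k with
    | zero => intro x; simpa using he.refl x
    | succ k ih =>
      intro x
      have h1 : (π ^ (k + 1)) x = (π ^ k) (π x) := by
        rw [pow_succ, Equiv.Perm.mul_apply]
      rw [h1]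
      exact he.trans (hstep x) (ih (π x))
  obtain ⟨i, -, -, rfl⟩ := h.exists_pow_eq''
  exact key i x

lemma quotCard_le_of_le {s t : Setoid (Fin n)} (h : ∀ x y, s.r x y → t.r x y) :
    Nat.card (Quotient t) ≤ Nat.card (Quotient s) := by
  apply Nat.card_le_card_of_surjective
    (Quotient.map (fun x => x) (fun a b hab => h a b hab) : Quotient s → Quotient t)
  intro q
  obtain ⟨x, rfl⟩ := q.exists_rep
  exact ⟨Quotient.mk s x, rfl⟩

/-- The setoid obtained from `s` by merging the classes of `a` and `b`. -/
def joinPair (s : Setoid (Fin n)) (a b : Fin n) : Setoid (Fin n) where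
  r x y := s.r x y ∨ ((s.r x a ∨ s.r x b) ∧ (s.r y a ∨ s.r y b))
  iseqv := by
    constructor
    · exact fun x => Or.inl (s.refl' x)
    · rintro x y (h | ⟨hx, hy⟩)
      exacts [Or.inl (s.symm' h), Or.inr ⟨hy, hx⟩]
    · rintro x y z (hxy | ⟨hx, hy⟩) (hyz | ⟨hy', hz⟩)
      · exact Or.inl (s.trans' hxy hyz)
      · exact Or.inr ⟨hy'.imp (s.trans' hxy) (s.trans' hxy), hz⟩
      · exact Or.inr ⟨hx, hy.imp (s.trans' (s.symm' hyz)) (s.trans' (s.symm' hyz))⟩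
      · exact Or.inr ⟨hx, hz⟩

lemma card_le_joinPair (s : Setoid (Fin n)) (a b : Fin n) :
    Nat.card (Quotient s) ≤ Nat.card (Quotient (joinPair s a b)) + 1 := by
  classical
  set J := joinPair s a b with hJ
  have hle : ∀ x y, s.r x y → J.r x y := fun x y h => Or.inl h
  have hwd : ∀ x y, s.r x y →
      (if s.r x b ∧ ¬ s.r x a then (Sum.inr () : Quotient J ⊕ Unit)
        else Sum.inl (Quotient.mk J x))
      = (if s.r y b ∧ ¬ s.r y a then (Sum.inr () : Quotient J ⊕ Unit)
        else Sum.inl (Quotient.mk J y)) := by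
    intro x y h
    have hb : s.r x b ↔ s.r y b := ⟨fun h' => s.trans' (s.symm' h) h', fun h' => s.trans' h h'⟩
    have ha : s.r x a ↔ s.r y a := ⟨fun h' => s.trans' (s.symm' h) h', fun h' => s.trans' h h'⟩
    by_cases hc : s.r x b ∧ ¬ s.r x a
    · rw [if_pos hc, if_pos (by rw [← hb, ← ha]; exact hc)]
    · rw [if_neg hc, if_neg (by rw [← hb, ← ha]; exact hc)]
      exact congrArg _ (Quot.sound (hle _ _ h))
  let F : Quotient s → Quotient J ⊕ Unit := Quotient.lift _ hwd
  have hinj : Function.Injective F := by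
    intro q q'
    refine Quotient.inductionOn₂ q q' ?_
    intro x y hxy
    simp only [F, Quotient.lift_mk] at hxy
    apply Quotient.sound
    by_cases hx : s.r x b ∧ ¬ s.r x a <;> by_cases hy : s.r y b ∧ ¬ s.r y a
    · exact s.trans' hx.1 (s.symm' hy.1)
    · rw [if_pos hx, if_neg hy] at hxy; exact absurd hxy (by simp)
    · rw [if_neg hx, if_pos hy] at hxy; exact absurd hxy (by simp)
    · rw [if_neg hx, if_neg hy] at hxy
      have hJxy : J.r x y := Quotient.exact (Sum.inl.inj hxy)
      rcases hJxy with h | ⟨cx, cy⟩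
      · exact h
      · have hxa : s.r x a := by
          rcases cx with h' | h'
          · exact h'
          · by_contra hxa; exact hx ⟨h', hxa⟩
        have hya : s.r y a := by
          rcases cy with h' | h'
          · exact h'
          · by_contra hya; exact hy ⟨h', hya⟩
        exact s.trans' hxa (s.symm' hya)
  calc Nat.card (Quotient s) ≤ Nat.card (Quotient J ⊕ Unit) :=
        Nat.card_le_card_of_injective F hinj
    _ = Nat.card (Quotient J) + 1 := by simp [Nat.card_sum, Nat.card_unique]

lemma d_mul_swap_ge (π : Equiv.Perm (Fin n)) {a b : Fin n} (hab : a ≠ b) :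
    d π ≤ d (π * Equiv.swap a b) + 1 := by
  set π' := π * Equiv.swap a b with hπ'
  set J := joinPair (scS π) a b with hJ
  have hstep : ∀ x, J.r x (π' x) := by
    intro x
    rcases eq_or_ne x a with rfl | hxa
    · have h1 : π' x = π b := by simp [hπ', Equiv.swap_apply_left]
      rw [h1]
      exact Or.inr ⟨Or.inl (SameCycle.refl _ _),
        Or.inr (Equiv.Perm.SameCycle.symm (⟨1, by simp⟩ : π.SameCycle b (π b)))⟩
    rcases eq_or_ne x b with rfl | hxb
    · have h1 : π' x = π a := by simp [hπ', Equiv.swap_apply_right]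
      rw [h1]
      exact Or.inr ⟨Or.inr (SameCycle.refl _ _),
        Or.inl (Equiv.Perm.SameCycle.symm (⟨1, by simp⟩ : π.SameCycle a (π a)))⟩
    · have h1 : π' x = π x := by simp [hπ', Equiv.swap_apply_of_ne_of_ne hxa hxb]
      rw [h1]
      exact Or.inl ⟨1, by simp⟩
  have h1 : ∀ x y, (scS π').r x y → J.r x y := fun x y h => sameCycle_ind J.iseqv hstep h
  calc d π ≤ Nat.card (Quotient J) + 1 := card_le_joinPair _ _ _
    _ ≤ d π' + 1 := by exact Nat.add_le_add_right (quotCard_le_of_le h1) 1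

lemma card_succ_le {A B : Type*} [Finite A] {f : A → B} (hf : Function.Surjective f)
    {a₁ a₂ : A} (hne : a₁ ≠ a₂) (heq : f a₁ = f a₂) : Nat.card B + 1 ≤ Nat.card A := by
  classical
  have : Finite B := Finite.of_surjective f hf
  set g := Function.surjInv hf with hg
  have hgf : ∀ bb, f (g bb) = bb := fun bb => Function.surjInv_eq hf bb
  let h : B ⊕ Unit → A := Sum.elim g (fun _ => if g (f a₁) = a₁ then a₂ else a₁)
  have hinj : Function.Injective h := by
    rintro (b | ⟨⟩) (b' | ⟨⟩) hbb
    · simp only [h, Sum.elim_inl] at hbb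
      have := congrArg f hbb
      rw [hgf, hgf] at this
      rw [this]
    · exfalso
      simp only [h, Sum.elim_inl, Sum.elim_inr] at hbb
      by_cases hc : g (f a₁) = a₁
      · rw [if_pos hc] at hbb
        have : b = f a₂ := by rw [← hbb, hgf]
        rw [← heq] at this
        rw [this] at hbb
        rw [hc] at hbb
        exact hne hbb
      · rw [if_neg hc] at hbb
        have : b = f a₁ := by rw [← hbb, hgf]
        rw [this] at hbb
        exact hc hbb
    · exfalso
      simp only [h, Sum.elim_inl, Sum.elim_inr] at hbb
      by_cases hc : g (f a₁) = a₁
      · rw [if_pos hc] at hbb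
        have : b' = f a₂ := by rw [hbb, hgf]
        rw [← heq] at this
        rw [this] at hbb
        rw [hc] at hbb
        exact hne hbb.symm
      · rw [if_neg hc] at hbb
        have : b' = f a₁ := by rw [hbb, hgf]
        rw [this] at hbb
        exact hc hbb.symm
    · rfl
  calc Nat.card B + 1 = Nat.card (B ⊕ Unit) := by simp [Nat.card_sum, Nat.card_unique]
    _ ≤ Nat.card A := Nat.card_le_card_of_injective h hinj

lemma d_swap_mul {β : Equiv.Perm (Fin n)} {a : Fin n} (ha : β a ≠ a) :
    d β + 1 ≤ d (Equiv.swap a (β a) * β) := by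
  set β' := Equiv.swap a (β a) * β with hβ'
  have hfix : β' a = a := by simp [hβ', Equiv.swap_apply_right]
  have hstep : ∀ x, β.SameCycle x (β' x) := by
    intro x
    have hx : β' x = Equiv.swap a (β a) (β x) := rfl
    rcases eq_or_ne (β x) a with h1 | h1
    · rw [hx, h1, Equiv.swap_apply_left]
      exact Equiv.Perm.SameCycle.trans (show β.SameCycle x a from h1 ▸ ⟨1, by simp⟩)
        ⟨1, by simp⟩
    rcases eq_or_ne (β x) (β a) with h2 | h2
    · have : x = a := β.injective h2
      rw [this, hfix]
    · rw [hx, Equiv.swap_apply_of_ne_of_ne h1 h2]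
      exact ⟨1, by simp⟩
  have hsub : ∀ x y, (scS β').r x y → (scS β).r x y :=
    fun x y h => sameCycle_ind (scS β).iseqv hstep h
  let F : Quotient (scS β') → Quotient (scS β) :=
    Quotient.map (fun x => x) (fun a b hab => hsub a b hab)
  have hsurj : Function.Surjective F := by
    intro q
    obtain ⟨x, rfl⟩ := q.exists_rep
    exact ⟨Quotient.mk _ x, rfl⟩
  have hne : (Quotient.mk (scS β') a) ≠ (Quotient.mk (scS β') (β a)) := by
    intro h
    have hsc : β'.SameCycle a (β a) := Quotient.exact h
    obtain ⟨i, hi⟩ := hsc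
    rw [Equiv.Perm.zpow_apply_eq_self_of_apply_eq_self hfix] at hi
    exact ha hi.symm
  have heq : F (Quotient.mk (scS β') a) = F (Quotient.mk (scS β') (β a)) :=
    Quotient.sound (⟨1, by simp⟩ : β.SameCycle a (β a))
  exact card_succ_le hsurj hne heq

lemma d_one : d (1 : Equiv.Perm (Fin n)) = n := by
  have hb : Function.Bijective (Quotient.mk (scS (1 : Equiv.Perm (Fin n)))) := by
    constructor
    · intro x y h
      exact Equiv.Perm.sameCycle_one.mp (Quotient.exact h)
    · intro q
      exact q.exists_rep
  rw [d, ← Nat.card_eq_of_bijective _ hb, Nat.card_eq_fintype_card, Fintype.card_fin]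

lemma d_le (π : Equiv.Perm (Fin n)) : d π ≤ n := by
  calc d π ≤ Nat.card (Fin n) :=
        Nat.card_le_card_of_surjective (Quotient.mk (scS π)) (fun q => q.exists_rep)
    _ = n := by simp [Nat.card_eq_fintype_card]

lemma d_mul_ge : ∀ (m : ℕ) (β : Equiv.Perm (Fin n)), β.support.card = m →
    ∀ π : Equiv.Perm (Fin n), d π + d β ≤ d (π * β) + n := by
  intro m
  induction m using Nat.strong_induction_on with
  | _ m ih =>
    intro β hm π
    rcases eq_or_ne β 1 with rfl | hβ
    · rw [mul_one, d_one]
    · obtain ⟨a, ha⟩ : ∃ a, β a ≠ a := by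
        by_contra h
        push_neg at h
        exact hβ (Equiv.ext h)
      set t := Equiv.swap a (β a) with ht
      have h1 : d π ≤ d (π * t) + 1 := d_mul_swap_ge π (fun h => ha h.symm)
      have h2 : d β + 1 ≤ d (t * β) := d_swap_mul ha
      have h3 : (t * β).support.card < m := hm ▸ Equiv.Perm.card_support_swap_mul ha
      have h4 := ih _ h3 (t * β) rfl (π * t)
      have h5 : π * t * (t * β) = π * β := by
        rw [mul_assoc, ← mul_assoc t, ht, Equiv.swap_mul_self, one_mul]
      rw [h5] at h4
      omega

end GenusAux

namespace GenusAux

open Equiv Equiv.Perm Function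

variable {n : ℕ}

lemma fixed_of_sameCycle {π : Equiv.Perm (Fin n)} {x y : Fin n} (h : π.SameCycle x y)
    (hx : π x = x) : y = x := by
  obtain ⟨i, hi⟩ := h
  rw [Equiv.Perm.zpow_apply_eq_self_of_apply_eq_self hx] at hi
  exact hi.symm

lemma d_eq_cycleCount (π : Equiv.Perm (Fin n)) : d π = cycleCount π := by
  classical
  let G : Fin n → ({x : Fin n // π x = x} ⊕ {c // c ∈ π.cycleFactorsFinset}) := fun x =>
    if h : π x = x then Sum.inl ⟨x, h⟩
    else Sum.inr ⟨π.cycleOf x,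
      Equiv.Perm.cycleOf_mem_cycleFactorsFinset_iff.mpr (Equiv.Perm.mem_support.mpr h)⟩
  have hwd : ∀ x y, (scS π).r x y → G x = G y := by
    intro x y h
    rcases Classical.em (π x = x) with hx | hx
    · have := fixed_of_sameCycle h hx
      subst this
      rfl
    · have hy : ¬ π y = y := by
        intro hy
        obtain rfl := fixed_of_sameCycle (Equiv.Perm.SameCycle.symm h) hy
        exact hx hy
      simp only [G, dif_neg hx, dif_neg hy]
      exact congrArg _ (Subtype.ext (Equiv.Perm.SameCycle.cycleOf_eq h))
  let F := Quotient.lift G hwd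
  have hF : Function.Bijective F := by
    constructor
    · intro q q'
      refine Quotient.inductionOn₂ q q' ?_
      intro x y h
      simp only [F, Quotient.lift_mk] at h
      apply Quotient.sound
      by_cases hx : π x = x <;> by_cases hy : π y = y <;>
        simp only [G, dif_pos, dif_neg, hx, hy] at h
      · obtain rfl : x = y := congrArg Subtype.val (Sum.inl.inj h)
        exact SameCycle.refl _ _
      · exact absurd h (by simp)
      · exact absurd h (by simp)
      · have hc : π.cycleOf x = π.cycleOf y := congrArg Subtype.val (Sum.inr.inj h)
        have hmem : y ∈ (π.cycleOf x).support := by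
          rw [hc]
          exact Equiv.Perm.mem_support_cycleOf_iff.mpr
            ⟨SameCycle.refl _ _, Equiv.Perm.mem_support.mpr hy⟩
        exact (Equiv.Perm.mem_support_cycleOf_iff.mp hmem).1
    · rintro (⟨x, hx⟩ | ⟨c, hc⟩)
      · exact ⟨Quotient.mk _ x, by simp [F, G, hx]⟩
      · obtain ⟨x, hx, -⟩ := (Equiv.Perm.mem_cycleFactorsFinset_iff.mp hc).1
        have hπx : π x = c x := ((Equiv.Perm.mem_cycleFactorsFinset_iff.mp hc).2 x
          (Equiv.Perm.mem_support.mpr hx)).symm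
        have hx' : ¬ π x = x := by rw [hπx]; exact hx
        refine ⟨Quotient.mk _ x, ?_⟩
        simp only [F, Quotient.lift_mk, G, dif_neg hx']
        exact congrArg _ (Subtype.ext
          (Equiv.Perm.cycle_is_cycleOf (Equiv.Perm.mem_support.mpr hx) hc).symm)
  have hcard := Nat.card_eq_of_bijective F hF
  rw [d, hcard, Nat.card_sum, Nat.card_eq_fintype_card, Nat.card_eq_fintype_card,
    Fintype.card_subtype, Fintype.card_coe, cycleCount]
  have hct : Multiset.card π.cycleType = π.cycleFactorsFinset.card := by
    simp [Equiv.Perm.cycleType]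
  rw [hct]
  omega

lemma blockPerm_mem {b : Finset (Fin n)} {x : Fin n} (hx : x ∈ b) : blockPerm b x ∈ b := by
  have h : x ∈ b.sort (· ≤ ·) := by rwa [Finset.mem_sort]
  have := List.formPerm_apply_mem_of_mem h
  rwa [Finset.mem_sort] at this

lemma noncommProd_apply_eq_self (s : Finset (Finset (Fin n))) (comm) {x : Fin n}
    (h : ∀ c ∈ s, blockPerm c x = x) : s.noncommProd blockPerm comm x = x :=
  Finset.noncommProd_induction s blockPerm comm (fun g => g x = x)
    (fun f g hf hg => by
      show (f * g) x = x
      rw [Equiv.Perm.mul_apply, show g x = x from hg, show f x = x from hf]) rfl h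

lemma partPerm_apply_of_mem (P : Finpartition (univ : Finset (Fin n))) {b : Finset (Fin n)}
    (hb : b ∈ P.parts) {x : Fin n} (hx : x ∈ b) : partPerm P x = blockPerm b x := by
  classical
  have hrest : ∀ (comm), ((P.parts.erase b).noncommProd blockPerm comm) x = x := by
    intro comm
    apply noncommProd_apply_eq_self
    intro c hc
    apply List.formPerm_apply_of_notMem
    rw [Finset.mem_sort]
    intro hxc
    exact (Finset.ne_of_mem_erase hc)
      (P.eq_of_mem_parts (Finset.mem_of_mem_erase hc) hb hxc hx)
  have key : ∀ comm, (P.parts.noncommProd blockPerm comm) x = blockPerm b x := fun comm => by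
    rw [← Finset.mul_noncommProd_erase P.parts hb blockPerm comm,
      Equiv.Perm.mul_apply]
    exact congrArg (blockPerm b) (hrest _)
  rw [partPerm]
  exact key _

end GenusAux

namespace GenusAux

open Equiv Equiv.Perm Function

variable {n : ℕ}

lemma partPerm_mem_part (P : Finpartition (univ : Finset (Fin n))) (x : Fin n) :
    partPerm P x ∈ P.part x := by
  rw [partPerm_apply_of_mem P (P.part_mem.mpr (Finset.mem_univ x)) (P.mem_part_self.mpr (Finset.mem_univ x))]
  exact blockPerm_mem (P.mem_part_self.mpr (Finset.mem_univ x))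

lemma part_partPerm (P : Finpartition (univ : Finset (Fin n))) (x : Fin n) :
    P.part (partPerm P x) = P.part x :=
  P.part_eq_of_mem (P.part_mem.mpr (Finset.mem_univ x)) (partPerm_mem_part P x)

lemma partPerm_pow_eq (P : Finpartition (univ : Finset (Fin n))) {b : Finset (Fin n)}
    (hb : b ∈ P.parts) {x : Fin n} (hx : x ∈ b) (k : ℕ) :
    (partPerm P ^ k) x = (blockPerm b ^ k) x ∧ (blockPerm b ^ k) x ∈ b := by
  induction k with
  | zero => simpa using hx
  | succ k ih =>
    have h1 : (partPerm P ^ (k + 1)) x = partPerm P ((partPerm P ^ k) x) := by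
      rw [pow_succ', Equiv.Perm.mul_apply]
    have h2 : (blockPerm b ^ (k + 1)) x = blockPerm b ((blockPerm b ^ k) x) := by
      rw [pow_succ', Equiv.Perm.mul_apply]
    rw [h1, h2, ih.1, partPerm_apply_of_mem P hb ih.2]
    exact ⟨rfl, blockPerm_mem ih.2⟩

lemma sameCycle_partPerm_of_mem (P : Finpartition (univ : Finset (Fin n)))
    {b : Finset (Fin n)} (hb : b ∈ P.parts) {x y : Fin n} (hx : x ∈ b) (hy : y ∈ b) :
    (partPerm P).SameCycle x y := by
  rcases eq_or_ne x y with rfl | hxy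
  · exact SameCycle.refl _ _
  have h2 : 2 ≤ (b.sort (· ≤ ·)).length := by
    rw [Finset.length_sort]
    exact Finset.one_lt_card.mpr ⟨x, hx, y, hy, hxy⟩
  have hnd := Finset.sort_nodup b (· ≤ ·)
  have hsc : (blockPerm b).SameCycle x y := by
    apply (List.isCycle_formPerm hnd h2).sameCycle
    · rw [List.formPerm_apply_mem_ne_self_iff _ hnd _ (by rwa [Finset.mem_sort])]
      exact h2
    · rw [List.formPerm_apply_mem_ne_self_iff _ hnd _ (by rwa [Finset.mem_sort])]
      exact h2
  obtain ⟨i, -, -, hiy⟩ := hsc.exists_pow_eq''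
  exact ⟨(i : ℤ), by rw [zpow_natCast, (partPerm_pow_eq P hb hx i).1, hiy]⟩

lemma d_partPerm (P : Finpartition (univ : Finset (Fin n))) : d (partPerm P) = P.parts.card := by
  classical
  let G : Fin n → {c // c ∈ P.parts} := fun x => ⟨P.part x, P.part_mem.mpr (Finset.mem_univ x)⟩
  have hwd : ∀ x y, (scS (partPerm P)).r x y → G x = G y := by
    intro x y h
    refine sameCycle_ind (r := fun a b => G a = G b) ⟨fun _ => rfl, Eq.symm, Eq.trans⟩ ?_ h
    intro z
    exact Subtype.ext (part_partPerm P z).symm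
  let F := Quotient.lift G hwd
  have hF : Function.Bijective F := by
    constructor
    · intro q q'
      refine Quotient.inductionOn₂ q q' ?_
      intro x y h
      simp only [F, Quotient.lift_mk] at h
      have hpp : P.part x = P.part y := congrArg Subtype.val h
      apply Quotient.sound
      exact sameCycle_partPerm_of_mem P (P.part_mem.mpr (Finset.mem_univ x))
        (P.mem_part_self.mpr (Finset.mem_univ x)) (hpp ▸ P.mem_part_self.mpr (Finset.mem_univ y))
    · rintro ⟨c, hc⟩
      obtain ⟨x, hx⟩ := P.nonempty_of_mem_parts hc
      exact ⟨Quotient.mk _ x, Subtype.ext (P.part_eq_of_mem hc hx)⟩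
  rw [d, Nat.card_eq_of_bijective F hF, Nat.card_eq_fintype_card, Fintype.card_coe]

lemma d_eq_one_of (π : Equiv.Perm (Fin n)) (hn : 1 ≤ n) (h : ∀ x y : Fin n, π.SameCycle x y) :
    d π = 1 := by
  have hne : Nonempty (Fin n) := ⟨⟨0, hn⟩⟩
  rw [d, Nat.card_eq_one_iff_unique]
  constructor
  · constructor
    intro q q'
    refine Quotient.inductionOn₂ q q' ?_
    intro x y
    exact Quotient.sound (h x y)
  · exact ⟨Quotient.mk _ hne.some⟩

lemma d_finRotate (hn : 1 ≤ n) : d (finRotate n) = 1 := by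
  apply d_eq_one_of _ hn
  intro x y
  match n, x, y with
  | 1, x, y =>
    obtain rfl := Subsingleton.elim x y
    exact SameCycle.refl _ _
  | (m + 2), x, y =>
    apply isCycle_finRotate.sameCycle
    · exact Equiv.Perm.mem_support.mp (by rw [support_finRotate]; exact Finset.mem_univ x)
    · exact Equiv.Perm.mem_support.mp (by rw [support_finRotate]; exact Finset.mem_univ y)

lemma sign_eq_d (π : Equiv.Perm (Fin n)) :
    Equiv.Perm.sign π = (-1 : ℤˣ) ^ (n - d π) := by
  have h1 : π.cycleType.sum = π.support.card := Equiv.Perm.sum_cycleType π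
  have h2 : Multiset.card π.cycleType ≤ π.cycleType.sum := by
    have := Multiset.card_nsmul_le_sum (s := π.cycleType) (a := 1)
      (fun x hx => Nat.one_le_iff_ne_zero.mpr (by
        have := Equiv.Perm.two_le_of_mem_cycleType hx; omega))
    simpa using this
  have hsup : π.support.card ≤ n := by
    have := Finset.card_le_card (Finset.subset_univ π.support)
    simpa using this
  have hfix : (Finset.univ.filter fun x => π x = x).card = n - π.support.card := by
    have hset : (Finset.univ.filter fun x => π x = x) = π.supportᶜ := by
      ext z
      simp [Equiv.Perm.mem_support]
    rw [hset, Finset.card_compl, Fintype.card_fin]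
  have h3 : d π + π.cycleType.sum = n + Multiset.card π.cycleType := by
    rw [d_eq_cycleCount, cycleCount, hfix]
    omega
  have h4 : π.cycleType.sum + Multiset.card π.cycleType
      = (n - d π) + 2 * Multiset.card π.cycleType := by omega
  rw [Equiv.Perm.sign_of_cycleType, h4, pow_add, pow_mul]
  norm_num

lemma neg_one_pow_mod {A B : ℕ} (h : ((-1 : ℤˣ)) ^ A = (-1 : ℤˣ) ^ B) : A % 2 = B % 2 := by
  rcases Nat.even_or_odd A with hA | hA <;> rcases Nat.even_or_odd B with hB | hB
  · rw [Nat.even_iff] at hA hB; omega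
  · rw [hA.neg_one_pow, hB.neg_one_pow] at h
    exact absurd h (by decide)
  · rw [hA.neg_one_pow, hB.neg_one_pow] at h
    exact absurd h (by decide)
  · rw [Nat.odd_iff] at hA hB; omega

end GenusAux


theorem genus_nonneg_and_even (n : ℕ) (hn : 1 ≤ n)
    (P : Finpartition (univ : Finset (Fin n))) :
    0 ≤ (n : ℤ) + 1 - (P.parts.card : ℤ) - (partFaces P : ℤ) ∧
      2 ∣ ((n : ℤ) + 1 - (P.parts.card : ℤ) - (partFaces P : ℤ)) ∧
      ∃ g : ℕ, HasGenus P g ∧ 2 * (g : ℤ) ≤ (n : ℤ) - (P.parts.card : ℤ) := by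
  classical
  open GenusAux in
  set τ := partPerm P with hτ
  set ρ := finRotate n * τ⁻¹ with hρ
  have hρτ : ρ * τ = finRotate n := by rw [hρ, inv_mul_cancel_right]
  have hk : P.parts.card = GenusAux.d τ := (GenusAux.d_partPerm P).symm
  have hf : partFaces P = GenusAux.d ρ := by
    rw [partFaces, ← GenusAux.d_eq_cycleCount]
  have hmain := GenusAux.d_mul_ge (τ.support.card) τ rfl ρ
  rw [hρτ, GenusAux.d_finRotate hn] at hmain
  have hdρ1 : 1 ≤ GenusAux.d ρ := by
    have : Nonempty (Quotient (GenusAux.scS ρ)) := ⟨Quotient.mk _ ⟨0, hn⟩⟩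
    exact Nat.one_le_iff_ne_zero.mpr (Nat.card_pos).ne'
  have hdρn : GenusAux.d ρ ≤ n := GenusAux.d_le ρ
  have hdτn : GenusAux.d τ ≤ n := GenusAux.d_le τ
  have hsign : Equiv.Perm.sign ρ * Equiv.Perm.sign τ = Equiv.Perm.sign (finRotate n) := by
    rw [← map_mul, hρτ]
  rw [GenusAux.sign_eq_d, GenusAux.sign_eq_d, GenusAux.sign_eq_d, ← pow_add,
    GenusAux.d_finRotate hn] at hsign
  have hmod := GenusAux.neg_one_pow_mod hsign
  refine ⟨?_, ?_, ⟨(n + 1 - GenusAux.d τ - GenusAux.d ρ) / 2, ?_, ?_⟩⟩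
  · rw [hk, hf]; omega
  · rw [hk, hf]; omega
  · show n + 1 = P.parts.card + partFaces P + 2 * _
    rw [hk, hf]
    omega
  · omega
end

section
/- Let n ≥ 2 and let α be a set partition of {1,…,n} one of whose blocks is a singleton {m}. Let α′ be the set partition of {1,…,n−1} obtained from α by deleting the block {m} and relabeling the remaining elements via the unique order-preserving bijection from {1,…,n}∖{m} to {1,…,n−1}. Then α′ has the same genus as α: g(α′) = g(α). -/
/-!
STATEMENT 9: Let n ≥ 2 and let α be a set partition of {1,…,n} one of whose blocks is
the singleton {m}.  Let α′ be the partition of {1,…,n−1} obtained by deleting the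
block {m} and relabeling via the unique order-preserving bijection from
{1,…,n}∖{m} to {1,…,n−1}.  Then g(α′) = g(α).

Here we write n as n+1 (with n ≥ 1); the order-preserving bijection from
Fin n to (Fin (n+1)) ∖ {m} is `m.succAbove`, so α is described as the partition whose
blocks are {m} together with the images of the blocks of α′ under `m.succAbove`.
-/

open Finset

variable {n : ℕ}

variable {α : Type*} [Fintype α] [DecidableEq α]

lemma isCycle_swap_mul_merge {c : Equiv.Perm α} (hc : c.IsCycle) {a b : α}
    (hab : a ≠ b) (ha : c a = a) (hb : c b ≠ b) : (Equiv.swap a b * c).IsCycle := by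
  set c' := Equiv.swap a b * c with hc'def
  have hne : ∀ z : α, c z ≠ z → z ≠ a := by
    rintro z hz rfl; exact hz ha
  have hcza : ∀ z : α, c z ≠ z → c z ≠ a := by
    intro z hz h
    exact hne z hz (c.injective (by rw [h, ha]))
  have hc'a : c' a = b := by
    simp [hc'def, ha]
  have step : ∀ z : α, c z ≠ z → (c').SameCycle z (c z) := by
    intro z hz
    by_cases hzb : c z = b
    · have h1 : c' z = a := by simp [hc'def, hzb]
      have h2 : (c').SameCycle z a := ⟨1, by simpa using h1⟩
      have h3 : (c').SameCycle a b := ⟨1, by simpa using hc'a⟩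
      rw [hzb]; exact h2.trans h3
    · refine ⟨1, ?_⟩
      simp only [zpow_one, hc'def, Equiv.Perm.mul_apply]
      exact Equiv.swap_apply_of_ne_of_ne (hcza z hz) hzb
  have key : ∀ i : ℕ, (c').SameCycle b ((c ^ i) b) := by
    intro i
    induction i with
    | zero => simp [Equiv.Perm.SameCycle.refl]
    | succ i ih =>
      have hz : c ((c ^ i) b) ≠ (c ^ i) b := by
        have : (c ^ i) b ∈ c.support := by
          rw [Equiv.Perm.pow_apply_mem_support]
          exact Equiv.Perm.mem_support.2 hb
        simpa [Equiv.Perm.mem_support] using this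
      have : (c ^ (i+1)) b = c ((c ^ i) b) := by
        rw [pow_succ', Equiv.Perm.mul_apply]
      rw [this]
      exact ih.trans (step _ hz)
  refine ⟨a, by rw [hc'a]; exact (Ne.symm hab), ?_⟩
  intro y hy
  by_cases hya : y = a
  · rw [hya]
  · have hcy : c y ≠ y := by
      intro h
      apply hy
      by_cases hyb : y = b
      · exact absurd (hyb ▸ h) hb
      · simp [hc'def, h, Equiv.swap_apply_of_ne_of_ne hya hyb]
    have hsc : c.SameCycle b y := hc.sameCycle hb hcy
    obtain ⟨i, -, -, hi⟩ := hsc.exists_pow_eq c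
    have h3 : (c').SameCycle a b := ⟨1, by simpa using hc'a⟩
    exact h3.trans (hi ▸ key i)

lemma count_swap_mul (π : Equiv.Perm α) {a b : α} (hab : a ≠ b) (ha : π a = a) :
    π.cycleType.card + (univ.filter fun x => π x = x).card
      = (Equiv.swap a b * π).cycleType.card
        + (univ.filter fun x => (Equiv.swap a b * π) x = x).card + 1 := by
  by_cases hb : π b = b
  · -- disjoint case
    have hdisj : Equiv.Perm.Disjoint (Equiv.swap a b) π := by
      intro x
      by_cases hxa : x = a
      · exact Or.inr (hxa ▸ ha)
      · by_cases hxb : x = b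
        · exact Or.inr (hxb ▸ hb)
        · exact Or.inl (Equiv.swap_apply_of_ne_of_ne hxa hxb)
    have hct : (Equiv.swap a b * π).cycleType = (Equiv.swap a b).cycleType + π.cycleType :=
      hdisj.cycleType_mul
    have hscyc : (Equiv.swap a b).cycleType = {2} := by
      rw [(Equiv.Perm.isCycle_swap hab).cycleType, Equiv.Perm.support_swap hab, card_pair hab]
    have hfix : (univ.filter fun x => (Equiv.swap a b * π) x = x)
        = (univ.filter fun x => π x = x) \ {a, b} := by
      ext x
      simp only [mem_filter, mem_univ, true_and, mem_sdiff, mem_insert, mem_singleton]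
      constructor
      · intro h
        have hxa : x ≠ a := by
          rintro rfl
          rw [Equiv.Perm.mul_apply, ha, Equiv.swap_apply_left] at h
          exact hab h.symm
        have hxb : x ≠ b := by
          rintro rfl
          rw [Equiv.Perm.mul_apply, hb, Equiv.swap_apply_right] at h
          exact hab h
        refine ⟨?_, by tauto⟩
        rw [Equiv.Perm.mul_apply] at h
        by_cases h1 : π x = a
        · exact absurd (π.injective (h1.trans ha.symm)) hxa
        · by_cases h2 : π x = b
          · exact absurd (π.injective (h2.trans hb.symm)) hxb
          · rwa [Equiv.swap_apply_of_ne_of_ne h1 h2] at h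
      · rintro ⟨hp, hx⟩
        push_neg at hx
        rw [Equiv.Perm.mul_apply, hp, Equiv.swap_apply_of_ne_of_ne hx.1 hx.2]
    have hsub : ({a, b} : Finset α) ⊆ univ.filter fun x => π x = x := by
      intro x hx
      simp only [mem_insert, mem_singleton] at hx
      rcases hx with rfl | rfl <;> simp [ha, hb]
    have hcard2 : ({a, b} : Finset α).card = 2 := card_pair hab
    have hge := card_le_card hsub
    rw [hct, hscyc, hfix, card_sdiff_of_subset hsub, hcard2]
    simp only [Multiset.card_add, Multiset.card_singleton]
    omega
  · -- b in support: merge a into the cycle of b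
    classical
    set c := π.cycleOf b with hcdef
    have hcmem : c ∈ π.cycleFactorsFinset :=
      Equiv.Perm.cycleOf_mem_cycleFactorsFinset_iff.mpr (Equiv.Perm.mem_support.2 hb)
    set r := π * c⁻¹ with hrdef
    have hdis : Equiv.Perm.Disjoint r c :=
      Equiv.Perm.disjoint_mul_inv_of_mem_cycleFactorsFinset hcmem
    have hrc : r * c = π := by rw [hrdef, inv_mul_cancel_right]
    have hcb : c b = π b := Equiv.Perm.cycleOf_apply_self π b
    have hca : c a = a := by
      have : a ∉ c.support := by
        intro h
        have := Equiv.Perm.support_cycleOf_le π b h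
        rw [Equiv.Perm.mem_support] at this
        exact this ha
      exact Equiv.Perm.notMem_support.mp this
    have hcbne : c b ≠ b := hcb ▸ hb
    have hcinvb : c⁻¹ b = π⁻¹ b := by
      have hsc : π.SameCycle b (π⁻¹ b) := ⟨-1, by simp⟩
      have hkey : c (π⁻¹ b) = b := by
        rw [hcdef, Equiv.Perm.cycleOf_apply, if_pos hsc, ← Equiv.Perm.mul_apply, mul_inv_cancel, Equiv.Perm.one_apply]
      rw [Equiv.Perm.inv_eq_iff_eq]
      exact hkey.symm
    have hra : r a = a := by
      rw [hrdef, Equiv.Perm.mul_apply]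
      have hia : c⁻¹ a = a := by rw [Equiv.Perm.inv_eq_iff_eq]; exact hca.symm
      rw [hia, ha]
    have hrb : r b = b := by
      rw [hrdef, Equiv.Perm.mul_apply, hcinvb, ← Equiv.Perm.mul_apply, mul_inv_cancel, Equiv.Perm.one_apply]
    have hcomm : Commute (Equiv.swap a b) r := by
      apply Equiv.Perm.Disjoint.commute
      intro x
      by_cases hxa : x = a
      · exact Or.inr (hxa ▸ hra)
      · by_cases hxb : x = b
        · exact Or.inr (hxb ▸ hrb)
        · exact Or.inl (Equiv.swap_apply_of_ne_of_ne hxa hxb)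
    set c' := Equiv.swap a b * c with hc'def
    have hsplit : Equiv.swap a b * π = r * c' := by
      rw [hc'def, ← mul_assoc, ← hcomm.eq, mul_assoc, hrc]
    have hc'cyc : c'.IsCycle :=
      isCycle_swap_mul_merge (Equiv.Perm.isCycle_cycleOf π hb) hab hca hcbne
    have hdis' : Equiv.Perm.Disjoint r c' := by
      intro x
      by_cases hrx : r x = x
      · exact Or.inl hrx
      · refine Or.inr ?_
        have hcx : c x = x := (hdis x).resolve_left hrx
        have hxa : x ≠ a := fun h => hrx (h ▸ hra)
        have hxb : x ≠ b := fun h => hrx (h ▸ hrb)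
        rw [hc'def, Equiv.Perm.mul_apply, hcx, Equiv.swap_apply_of_ne_of_ne hxa hxb]
    have hctP : π.cycleType = r.cycleType + c.cycleType := by
      rw [← hrc]; exact hdis.cycleType_mul
    have hctP' : (Equiv.swap a b * π).cycleType = r.cycleType + c'.cycleType := by
      rw [hsplit]; exact hdis'.cycleType_mul
    have hfix : (univ.filter fun x => (Equiv.swap a b * π) x = x)
        = (univ.filter fun x => π x = x).erase a := by
      ext x
      simp only [mem_filter, mem_univ, true_and, mem_erase]
      constructor
      · intro h
        have hxa : x ≠ a := by
          rintro rfl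
          rw [Equiv.Perm.mul_apply, ha, Equiv.swap_apply_left] at h
          exact hab h.symm
        refine ⟨hxa, ?_⟩
        by_cases hp : π x = x
        · exact hp
        · exfalso
          rw [Equiv.Perm.mul_apply] at h
          by_cases h1 : π x = a
          · exact hxa (π.injective (h1.trans ha.symm) ▸ rfl)
          · by_cases h2 : π x = b
            · rw [h2, Equiv.swap_apply_right] at h
              exact hxa h.symm
            · rw [Equiv.swap_apply_of_ne_of_ne h1 h2] at h
              exact hp h
      · rintro ⟨hxa, hp⟩
        have hxb : x ≠ b := by rintro rfl; exact hb hp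
        rw [Equiv.Perm.mul_apply, hp, Equiv.swap_apply_of_ne_of_ne hxa hxb]
    have hamem : a ∈ univ.filter fun x => π x = x := by simp [ha]
    rw [hctP, hctP', hfix, card_erase_of_mem hamem,
      (Equiv.Perm.isCycle_cycleOf π hb).cycleType, hc'cyc.cycleType]
    have hpos : 0 < (univ.filter fun x => π x = x).card := card_pos.2 ⟨a, hamem⟩
    simp only [Multiset.card_add, Multiset.coe_card, List.length_singleton, Multiset.card_singleton]
    omega

section Ext
variable {n : ℕ}

/-- Extension of a permutation of `Fin n` to `Fin (n+1)`, fixing `m`. -/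
def embHom (m : Fin (n+1)) : Equiv.Perm (Fin n) →* Equiv.Perm (Fin (n + 1)) :=
  Equiv.Perm.extendDomainHom (finSuccAboveEquiv m)

lemma embHom_apply_succAbove (m : Fin (n+1)) (π : Equiv.Perm (Fin n)) (z : Fin n) :
    embHom m π (m.succAbove z) = m.succAbove (π z) := by
  have h := Equiv.Perm.extendDomain_apply_image π (finSuccAboveEquiv m) z
  simpa [finSuccAboveEquiv_apply, embHom, Equiv.Perm.extendDomainHom] using h

lemma embHom_apply_self (m : Fin (n+1)) (π : Equiv.Perm (Fin n)) :
    embHom m π m = m := by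
  have h := Equiv.Perm.extendDomain_apply_not_subtype π (finSuccAboveEquiv m)
    (b := m) (by simp)
  simpa [embHom, Equiv.Perm.extendDomainHom] using h

lemma cycleType_embHom (m : Fin (n+1)) (π : Equiv.Perm (Fin n)) :
    (embHom m π).cycleType = π.cycleType := by
  simp [embHom, Equiv.Perm.extendDomainHom, Equiv.Perm.cycleType_extendDomain]

lemma filter_fixed_embHom (m : Fin (n+1)) (π : Equiv.Perm (Fin n)) :
    (univ.filter fun x => embHom m π x = x)
      = insert m ((univ.filter fun z => π z = z).image m.succAbove) := by
  ext x
  by_cases hx : x = m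
  · subst hx
    simp [embHom_apply_self]
  · obtain ⟨y, rfl⟩ := Fin.exists_succAbove_eq hx
    have hinj : Function.Injective m.succAbove := (Fin.strictMono_succAbove m).injective
    simp only [mem_filter, mem_univ, true_and, mem_insert, mem_image,
      embHom_apply_succAbove]
    constructor
    · intro h
      exact Or.inr ⟨y, by simpa using hinj h, rfl⟩
    · rintro (h | ⟨z, hz, hzy⟩)
      · exact absurd h (Fin.succAbove_ne m y)
      · obtain rfl : z = y := hinj hzy
        rw [hz]

lemma card_fixed_embHom (m : Fin (n+1)) (π : Equiv.Perm (Fin n)) :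
    (univ.filter fun x => embHom m π x = x).card
      = (univ.filter fun z => π z = z).card + 1 := by
  rw [filter_fixed_embHom, card_insert_of_notMem, card_image_of_injective _
    (Fin.strictMono_succAbove m).injective]
  · intro h
    obtain ⟨z, -, hz⟩ := mem_image.mp h
    exact Fin.succAbove_ne m z hz

lemma embHom_swap (m : Fin (n+1)) (x y : Fin n) :
    embHom m (Equiv.swap x y) = Equiv.swap (m.succAbove x) (m.succAbove y) := by
  have hinj : Function.Injective m.succAbove := (Fin.strictMono_succAbove m).injective
  ext u
  by_cases hu : u = m
  · rw [hu, embHom_apply_self,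
      Equiv.swap_apply_of_ne_of_ne (Fin.ne_succAbove m x) (Fin.ne_succAbove m y)]
  · obtain ⟨v, rfl⟩ := Fin.exists_succAbove_eq hu
    rw [embHom_apply_succAbove]
    rcases eq_or_ne v x with rfl | hvx
    · rw [Equiv.swap_apply_left, Equiv.swap_apply_left]
    · rcases eq_or_ne v y with rfl | hvy
      · rw [Equiv.swap_apply_right, Equiv.swap_apply_right]
      · rw [Equiv.swap_apply_of_ne_of_ne hvx hvy,
          Equiv.swap_apply_of_ne_of_ne (fun h => hvx (hinj h)) (fun h => hvy (hinj h))]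

lemma formPerm_map_succAbove (m : Fin (n+1)) (l : List (Fin n)) :
    (l.map m.succAbove).formPerm = embHom m l.formPerm := by
  induction l with
  | nil => simp [List.formPerm_nil]
  | cons x t ih =>
    cases t with
    | nil => simp [List.formPerm_singleton]
    | cons y t' =>
      rw [List.map_cons, List.map_cons, List.formPerm_cons_cons, List.formPerm_cons_cons,
        ← List.map_cons, ih, ← embHom_swap, ← map_mul]

lemma sort_image_succAbove (m : Fin (n+1)) (b : Finset (Fin n)) :
    (b.image m.succAbove).sort (· ≤ ·) = (b.sort (· ≤ ·)).map m.succAbove := by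
  have hinj : Function.Injective m.succAbove := (Fin.strictMono_succAbove m).injective
  have hperm : List.Perm ((b.image m.succAbove).sort (· ≤ ·)) ((b.sort (· ≤ ·)).map m.succAbove) := by
    apply Multiset.coe_eq_coe.mp
    rw [Finset.sort_eq, Finset.image_val_of_injOn (hinj.injOn), ← Multiset.map_coe,
      Finset.sort_eq]
  have hs2 : List.Pairwise (· ≤ ·) ((b.sort (· ≤ ·)).map m.succAbove) :=
    List.Pairwise.map _ (fun a b hab => (Fin.strictMono_succAbove m).monotone hab)
      (Finset.pairwise_sort _ _)
  exact hperm.eq_of_pairwise' (Finset.pairwise_sort _ _) hs2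

end Ext

lemma noncommProd_image_of_injOn {α' β M : Type*} [DecidableEq α'] [DecidableEq β] [Monoid M]
    (s : Finset α') (g : α' → β) (hg : Set.InjOn g s) (f : β → M) (comm) :
    (s.image g).noncommProd f comm
      = s.noncommProd (fun a => f (g a)) (fun x hx y hy hne =>
          comm (Finset.mem_coe.2 (mem_image_of_mem g (Finset.mem_coe.1 hx)))
            (Finset.mem_coe.2 (mem_image_of_mem g (Finset.mem_coe.1 hy)))
            (fun e => hne (hg hx hy e))) := by
  unfold Finset.noncommProd
  congr 1
  rw [Finset.image_val_of_injOn hg, Multiset.map_map]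
  rfl

lemma swap_rotate_succAbove {k : ℕ} (m : Fin (k+2)) (z : Fin (k+1)) :
    Equiv.swap m (m+1) (m.succAbove (finRotate (k+1) z)) = finRotate (k+2) (m.succAbove z) := by
  have hsv : ∀ w : Fin (k+1), (m.succAbove w).val
      = if w.val < m.val then w.val else w.val + 1 := by
    intro w
    by_cases h : w.castSucc < m
    · rw [Fin.succAbove_of_castSucc_lt _ _ h, if_pos (by simpa [Fin.lt_def] using h)]
      rfl
    · rw [Fin.succAbove_of_le_castSucc _ _ (le_of_not_gt h),
        if_neg (by simpa [Fin.lt_def] using h)]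
      rfl
  have hrot1 : (finRotate (k+1) z).val = if z.val = k then 0 else z.val + 1 := by
    rw [coe_finRotate]
    rcases eq_or_ne z (Fin.last k) with rfl | hz
    · rw [if_pos rfl, if_pos (by simp)]
    · rw [if_neg hz, if_neg (by simpa [Fin.ext_iff] using hz)]
  have hrot2 : ∀ w : Fin (k+2), (finRotate (k+2) w).val
      = if w.val = k+1 then 0 else w.val + 1 := by
    intro w
    rw [coe_finRotate]
    rcases eq_or_ne w (Fin.last (k+1)) with rfl | hw
    · rw [if_pos rfl, if_pos (by simp)]
    · rw [if_neg hw, if_neg (by simpa [Fin.ext_iff] using hw)]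
  have hm1 : (m + 1).val = if m.val = k+1 then 0 else m.val + 1 := by
    rw [Fin.val_add_one]
    rcases eq_or_ne m (Fin.last (k+1)) with rfl | hm
    · rw [if_pos rfl, if_pos (by simp)]
    · rw [if_neg hm, if_neg (by simpa [Fin.ext_iff] using hm)]
  have hmk : m.val < k + 2 := m.isLt
  have hzk : z.val < k + 1 := z.isLt
  apply Fin.ext
  rw [Equiv.swap_apply_def, apply_ite Fin.val, apply_ite Fin.val]
  simp only [Fin.ext_iff]
  rw [hrot2, hsv, hsv, hrot1, hm1]
  split_ifs <;> (try split_ifs at *) <;> omega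

theorem genus_delete_singleton (n : ℕ) (hn : 1 ≤ n) (m : Fin (n + 1))
    (P : Finpartition (univ : Finset (Fin (n + 1))))
    (P' : Finpartition (univ : Finset (Fin n)))
    (hm : ({m} : Finset (Fin (n + 1))) ∈ P.parts)
    (hP : P.parts =
      insert ({m} : Finset (Fin (n + 1)))
        (P'.parts.image fun b => b.image m.succAbove)) :
    ∀ g : ℕ, HasGenus P' g ↔ HasGenus P g := by
  obtain ⟨k, rfl⟩ : ∃ k, n = k + 1 := ⟨n - 1, by omega⟩
  have hinj : Function.Injective m.succAbove := (Fin.strictMono_succAbove m).injective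
  have hmNotMem : ({m} : Finset (Fin (k + 2)))
      ∉ P'.parts.image (fun b => b.image m.succAbove) := by
    intro h
    obtain ⟨b, hb, hbm⟩ := mem_image.mp h
    obtain ⟨x, hx⟩ := P'.nonempty_of_mem_parts hb
    have hxm : m.succAbove x ∈ ({m} : Finset (Fin (k+2))) := hbm ▸ mem_image_of_mem _ hx
    exact Fin.succAbove_ne m x (mem_singleton.mp hxm)
  have hcard : P.parts.card = P'.parts.card + 1 := by
    rw [hP, card_insert_of_notMem hmNotMem,
      card_image_of_injective _ (Finset.image_injective hinj)]
  have hblock : ∀ b : Finset (Fin (k+1)),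
      blockPerm (b.image m.succAbove) = embHom m (blockPerm b) := by
    intro b
    rw [blockPerm, blockPerm, sort_image_succAbove, formPerm_map_succAbove]
  have hτ : partPerm P = embHom m (partPerm P') := by
    rw [partPerm, partPerm]
    refine (Finset.noncommProd_congr hP (fun x _ => rfl) _).trans ?_
    erw [Finset.noncommProd_insert_of_notMem _ _ _ _ hmNotMem]
    have h1 : blockPerm ({m} : Finset (Fin (k+2))) = 1 := by
      rw [blockPerm, Finset.sort_singleton, List.formPerm_singleton]
    rw [h1, one_mul]
    erw [noncommProd_image_of_injOn _ _ ((Finset.image_injective hinj).injOn) blockPerm]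
    erw [Finset.noncommProd_congr rfl (fun b _ => hblock b)]
    exact (Finset.map_noncommProd P'.parts blockPerm
      (fun a ha b hb hab => by
        have hd : Disjoint a b := P'.disjoint ha hb hab
        apply Equiv.Perm.Disjoint.commute
        intro x
        by_cases hx : x ∈ a
        · right
          apply List.formPerm_apply_of_notMem
          rw [Finset.mem_sort]
          exact fun hxb => Finset.disjoint_left.mp hd hx hxb
        · left
          apply List.formPerm_apply_of_notMem
          rw [Finset.mem_sort]
          exact hx) (embHom m)).symm
  have hfaces : partFaces P = partFaces P' := by
    set τ := partPerm P' with hτ'def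
    have hm1 : m ≠ m + 1 := by
      intro h
      have h0 : (1 : Fin (k+2)) = 0 := left_eq_add.mp h
      simp [Fin.ext_iff] at h0
    have hρ : finRotate (k+2) * (partPerm P)⁻¹
        = Equiv.swap m (m+1) * embHom m (finRotate (k+1) * τ⁻¹) := by
      rw [hτ, ← map_inv]
      apply Equiv.ext
      intro x
      by_cases hx : x = m
      · rw [hx]
        simp only [Equiv.Perm.mul_apply, map_mul, embHom_apply_self,
          finRotate_succ_apply, Equiv.swap_apply_left]
      · obtain ⟨y, rfl⟩ := Fin.exists_succAbove_eq hx
        simp only [Equiv.Perm.mul_apply, map_mul, embHom_apply_succAbove]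
        exact (swap_rotate_succAbove m (τ⁻¹ y)).symm
    rw [partFaces, partFaces, hρ]
    set ρ := finRotate (k+1) * τ⁻¹ with hρdef
    have hfixm : embHom m ρ m = m := embHom_apply_self m ρ
    have hcount := count_swap_mul (embHom m ρ) hm1 hfixm
    have h2 : (embHom m ρ).cycleType.card = ρ.cycleType.card :=
      congrArg Multiset.card (cycleType_embHom m ρ)
    have h3 := card_fixed_embHom m ρ
    unfold cycleCount
    omega
  intro g
  unfold HasGenus
  rw [hcard, hfaces]
  omega
end

section
/- For all n ≥ 1, the number of set partitions of an n-element set equals the number of set partitions of an n-element set having no singleton block plus the number of set partitions of an (n+1)-element set having no singleton block; i.e., B_n = B̂_n + B̂_{n+1}, where B_n is the n-th Bell number and B̂_n is the number of partitions of an n-element set in which every block has at least two elements. -/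
/-!
STATEMENT 12: For all n ≥ 1, B_n = B̂_n + B̂_{n+1}, where B_n is the number of set
partitions of an n-element set and B̂_n the number of set partitions of an n-element
set in which every block has at least two elements.
-/

open Finset

/-- The Bell number: the number of set partitions of {1,…,n}. -/
noncomputable def bell (n : ℕ) : ℕ :=
  Nat.card (Finpartition (univ : Finset (Fin n)))

/-- The associated Bell number: the number of set partitions of {1,…,n} with no
singleton block. -/
noncomputable def bellHat (n : ℕ) : ℕ :=
  Nat.card {P : Finpartition (univ : Finset (Fin n)) // ∀ b ∈ P.parts, 2 ≤ b.card}

section Aux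


lemma srefl {γ : Type*} (s : Setoid γ) (a : γ) : s.r a a := s.iseqv.refl a
lemma ssymm {γ : Type*} (s : Setoid γ) {a b : γ} (h : s.r a b) : s.r b a := s.iseqv.symm h
lemma strans {γ : Type*} (s : Setoid γ) {a b c : γ} (h : s.r a b) (h' : s.r b c) : s.r a c :=
  s.iseqv.trans h h'

/-- `x` is a singleton class of `s`. -/
def SetoidSing {γ : Type*} (s : Setoid γ) (x : γ) : Prop := ∀ y, s.r x y → y = x

/-- `s` has no singleton class. -/
def NoSing {γ : Type*} (s : Setoid γ) : Prop := ∀ x, ∃ y, y ≠ x ∧ s.r x y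

lemma not_noSing_iff {γ : Type*} (s : Setoid γ) : ¬ NoSing s ↔ ∃ x, SetoidSing s x := by
  unfold NoSing SetoidSing
  push_neg
  exact exists_congr fun x => forall_congr' fun y => by tauto

variable {α : Type*} [Fintype α] [DecidableEq α]

/-- The setoid associated to a finpartition of `univ`. -/
def Finpartition.toSetoid (P : Finpartition (univ : Finset α)) : Setoid α :=
  ⟨fun x y => P.part x = P.part y, ⟨fun _ => rfl, Eq.symm, Eq.trans⟩⟩

/-- Finpartitions of `univ` are the same as setoids. -/
noncomputable def finpartitionEquivSetoid :
    Finpartition (univ : Finset α) ≃ Setoid α where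
  toFun := Finpartition.toSetoid
  invFun s := letI := Classical.decRel s.r; Finpartition.ofSetoid s
  left_inv P := by
    letI := Classical.decRel (Finpartition.toSetoid P).r
    have key : ∀ a b : α, b ∈ P.part a ↔ P.part a = P.part b := fun a b =>
      (P.mem_part_iff_part_eq_part (Finset.mem_univ b) (Finset.mem_univ a)).trans eq_comm
    ext t
    simp only [Finpartition.ofSetoid, Finpartition.ofSetSetoid_parts, Finset.mem_image, Finset.mem_univ, true_and]
    constructor
    · rintro ⟨a, rfl⟩
      have : ({b | (Finpartition.toSetoid P).r a b} : Finset α) = P.part a := by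
        ext b
        simp only [Finset.mem_filter, Finset.mem_univ, true_and]
        exact (key a b).symm
      rw [this]
      exact P.part_mem.mpr (Finset.mem_univ a)
    · intro ht
      obtain ⟨x, hx⟩ := P.nonempty_of_mem_parts ht
      refine ⟨x, ?_⟩
      have hpart : P.part x = t := P.part_eq_of_mem ht hx
      ext b
      simp only [Finset.mem_filter, Finset.mem_univ, true_and]
      rw [← hpart]
      exact (key x b).symm
  right_inv s := by
    letI := Classical.decRel s.r
    apply Setoid.ext
    intro x y
    show (Finpartition.ofSetoid s).part x = (Finpartition.ofSetoid s).part y ↔ s.r x y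
    constructor
    · intro h
      have hy : y ∈ (Finpartition.ofSetoid s).part y :=
        (Finpartition.ofSetoid s).mem_part (Finset.mem_univ y)
      rw [← h] at hy
      exact Finpartition.mem_part_ofSetoid_iff_rel.mp hy
    · intro h
      have hy : y ∈ (Finpartition.ofSetoid s).part x :=
        Finpartition.mem_part_ofSetoid_iff_rel.mpr h
      exact ((Finpartition.ofSetoid s).part_eq_of_mem
        ((Finpartition.ofSetoid s).part_mem.mpr (Finset.mem_univ x)) hy).symm

lemma cond_iff_noSing (P : Finpartition (univ : Finset α)) :
    (∀ b ∈ P.parts, 2 ≤ b.card) ↔ NoSing P.toSetoid := by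
  constructor
  · intro h x
    have hx : x ∈ P.part x := P.mem_part (Finset.mem_univ x)
    have h2 : 2 ≤ (P.part x).card := h _ (P.part_mem.mpr (Finset.mem_univ x))
    obtain ⟨y, hy, hyx⟩ := Finset.exists_mem_ne (s := P.part x) (by omega) x
    refine ⟨y, hyx, ?_⟩
    show P.part x = P.part y
    exact (P.part_eq_of_mem (P.part_mem.mpr (Finset.mem_univ x)) hy).symm
  · intro h b hb
    obtain ⟨x, hx⟩ := P.nonempty_of_mem_parts hb
    obtain ⟨y, hyx, hr⟩ := h x
    have hbx : P.part x = b := P.part_eq_of_mem hb hx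
    have hy : y ∈ b := by
      rw [← hbx, show P.part x = P.part y from hr]
      exact P.mem_part (Finset.mem_univ y)
    exact Finset.one_lt_card.mpr ⟨x, hx, y, hy, fun h => hyx h.symm⟩

end Aux

section SetoidBij

variable {α : Type*}

/-- Forward relation on `Option α`. -/
def optRel (s : Setoid α) : Option α → Option α → Prop
  | none, none => True
  | none, some y => SetoidSing s y
  | some x, none => SetoidSing s x
  | some x, some y => s.r x y ∨ (SetoidSing s x ∧ SetoidSing s y)

lemma sing_of_rel {s : Setoid α} {x y : α} (hx : SetoidSing s x) (h : s.r x y) :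
    SetoidSing s y := by
  have := hx y h
  subst this; exact hx

/-- Forward setoid on `Option α`. -/
def optSetoid (s : Setoid α) : Setoid (Option α) where
  r := optRel s
  iseqv := by
    constructor
    · rintro (_ | x)
      · trivial
      · exact Or.inl (srefl s x)
    · rintro (_ | x) (_ | y) h <;> try trivial
      rcases h with h | ⟨h1, h2⟩
      · exact Or.inl (ssymm s h)
      · exact Or.inr ⟨h2, h1⟩
    · rintro (_ | x) (_ | y) (_ | z) hxy hyz <;> try trivial
      · -- none, some y, some z
        rcases hyz with h | ⟨_, h2⟩
        · exact sing_of_rel hxy h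
        · exact h2
      · -- some x, none, some z
        exact Or.inr ⟨hxy, hyz⟩
      · -- some x, some y, none
        rcases hxy with h | ⟨h1, _⟩
        · exact sing_of_rel hyz (ssymm s h)
        · exact h1
      · -- some, some, some
        rcases hxy with h | ⟨h1, h2⟩
        · rcases hyz with h' | ⟨h1', h2'⟩
          · exact Or.inl (strans s h h')
          · exact Or.inr ⟨sing_of_rel h1' (ssymm s h), h2'⟩
        · rcases hyz with h' | ⟨h1', h2'⟩
          · exact Or.inr ⟨h1, sing_of_rel h2 h'⟩
          · exact Or.inr ⟨h1, h2'⟩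

/-- Backward setoid on `α` from a setoid on `Option α`. -/
def unoptSetoid (t : Setoid (Option α)) : Setoid α where
  r x y := (t.r (some x) (some y) ∧ ¬ t.r (some x) none) ∨ x = y
  iseqv := by
    constructor
    · exact fun x => Or.inr rfl
    · rintro x y (⟨h, hn⟩ | rfl)
      · exact Or.inl ⟨ssymm t h, fun hc => hn (strans t h hc)⟩
      · exact Or.inr rfl
    · rintro x y z (⟨h, hn⟩ | rfl) (⟨h', hn'⟩ | rfl)
      · exact Or.inl ⟨strans t h h', hn⟩
      · exact Or.inl ⟨h, hn⟩
      · exact Or.inl ⟨h', hn'⟩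
      · exact Or.inr rfl

lemma sing_unopt_iff {t : Setoid (Option α)} (ht : NoSing t) (x : α) :
    SetoidSing (unoptSetoid t) x ↔ t.r (some x) none := by
  constructor
  · intro hs
    by_contra hn
    obtain ⟨b, hb, hr⟩ := ht (some x)
    match b with
    | none => exact hn hr
    | some y =>
      have : y = x := hs y (Or.inl ⟨hr, hn⟩)
      exact hb (by rw [this])
  · rintro h y (⟨_, hn⟩ | rfl)
    · exact absurd h hn
    · rfl

noncomputable def setoidSumEquiv :
    {s : Setoid α // ¬ NoSing s} ≃ {t : Setoid (Option α) // NoSing t} where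
  toFun := fun ⟨s, hs⟩ => ⟨optSetoid s, by
    obtain ⟨x0, hx0⟩ := (not_noSing_iff s).mp hs
    rintro (_ | x)
    · exact ⟨some x0, by simp, hx0⟩
    · by_cases hx : SetoidSing s x
      · exact ⟨none, by simp, hx⟩
      · unfold SetoidSing at hx
        push_neg at hx
        obtain ⟨y, hr, hy⟩ := hx
        exact ⟨some y, by simpa using hy, Or.inl hr⟩⟩
  invFun := fun ⟨t, ht⟩ => ⟨unoptSetoid t, by
    rw [not_noSing_iff]
    obtain ⟨b, hb, hr⟩ := ht none
    match b with
    | some x0 => exact ⟨x0, (sing_unopt_iff ht x0).mpr (ssymm t hr)⟩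
    | none => exact absurd rfl hb⟩
  left_inv := fun ⟨s, hs⟩ => by
    apply Subtype.ext
    apply Setoid.ext
    intro x y
    show ((optSetoid s).r (some x) (some y) ∧ ¬ (optSetoid s).r (some x) none) ∨ x = y ↔ s.r x y
    constructor
    · rintro (⟨h, hn⟩ | rfl)
      · rcases h with h | ⟨h1, _⟩
        · exact h
        · exact absurd h1 hn
      · exact srefl s x
    · intro h
      by_cases hx : SetoidSing s x
      · exact Or.inr (hx y h).symm
      · exact Or.inl ⟨Or.inl h, hx⟩
  right_inv := fun ⟨t, ht⟩ => by
    apply Subtype.ext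
    apply Setoid.ext
    intro a b
    match a, b with
    | none, none =>
      exact iff_of_true trivial (srefl t none)
    | none, some y =>
      show SetoidSing (unoptSetoid t) y ↔ _
      rw [sing_unopt_iff ht]
      exact ⟨fun h => ssymm t h, fun h => ssymm t h⟩
    | some x, none =>
      show SetoidSing (unoptSetoid t) x ↔ _
      exact sing_unopt_iff ht x
    | some x, some y =>
      show (unoptSetoid t).r x y ∨
        (SetoidSing (unoptSetoid t) x ∧ SetoidSing (unoptSetoid t) y) ↔ _
      rw [sing_unopt_iff ht, sing_unopt_iff ht]
      constructor
      · rintro ((⟨h, _⟩ | rfl) | ⟨h1, h2⟩)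
        · exact h
        · exact srefl t _
        · exact strans t h1 (ssymm t h2)
      · intro h
        by_cases hn : t.r (some x) none
        · exact Or.inr ⟨hn, strans t (ssymm t h) hn⟩
        · exact Or.inl (Or.inl ⟨h, hn⟩)

/-- Transport a setoid along an equivalence. -/
def setoidCongr {β : Type*} (e : α ≃ β) : Setoid α ≃ Setoid β where
  toFun s := ⟨fun a b => s.r (e.symm a) (e.symm b),
    ⟨fun _ => srefl s _, fun h => ssymm s h, fun h h' => strans s h h'⟩⟩
  invFun s := ⟨fun a b => s.r (e a) (e b),
    ⟨fun _ => srefl s _, fun h => ssymm s h, fun h h' => strans s h h'⟩⟩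
  left_inv s := Setoid.ext fun a b => by
    show s.r (e.symm (e a)) (e.symm (e b)) ↔ s.r a b
    rw [e.symm_apply_apply, e.symm_apply_apply]
  right_inv s := Setoid.ext fun a b => by
    show s.r (e (e.symm a)) (e (e.symm b)) ↔ s.r a b
    rw [e.apply_symm_apply, e.apply_symm_apply]

lemma noSing_setoidCongr {β : Type*} (e : α ≃ β) (s : Setoid α) :
    NoSing s ↔ NoSing (setoidCongr e s) := by
  constructor
  · intro h b
    obtain ⟨y, hy, hr⟩ := h (e.symm b)
    refine ⟨e y, fun hc => hy (by simpa using congrArg e.symm hc), ?_⟩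
    show s.r (e.symm b) (e.symm (e y))
    rw [e.symm_apply_apply]
    exact hr
  · intro h x
    obtain ⟨b, hb, hr⟩ := h (e x)
    refine ⟨e.symm b, fun hc => hb (by simpa using congrArg e hc), ?_⟩
    have h2 : s.r (e.symm (e x)) (e.symm b) := hr
    rwa [e.symm_apply_apply] at h2

end SetoidBij

instance finpartitionFinite {α : Type*} [Fintype α] [DecidableEq α] :
    Finite (Finpartition (univ : Finset α)) :=
  Finite.of_injective (fun P => P.parts) (fun P Q h => by ext1; exact h)

theorem bell_eq_bellHat_add_bellHat_succ (n : ℕ) (hn : 1 ≤ n) :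
    bell n = bellHat n + bellHat (n + 1) := by
  classical
  -- the main equivalence
  let E : ∀ m : ℕ, Finpartition (univ : Finset (Fin m)) ≃ Setoid (Fin m) :=
    fun m => finpartitionEquivSetoid
  have key : Finpartition (univ : Finset (Fin n)) ≃
      {P : Finpartition (univ : Finset (Fin n)) // ∀ b ∈ P.parts, 2 ≤ b.card} ⊕
      {P : Finpartition (univ : Finset (Fin (n + 1))) // ∀ b ∈ P.parts, 2 ≤ b.card} := by
    refine (E n).trans ?_
    refine (Equiv.sumCompl (fun s : Setoid (Fin n) => NoSing s)).symm.trans ?_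
    refine Equiv.sumCongr ?_ ?_
    · exact ((E n).symm.subtypeEquiv (fun s => by
        rw [cond_iff_noSing]
        exact iff_of_eq (congrArg NoSing ((E n).apply_symm_apply s)).symm))
    · have e2 : {t : Setoid (Option (Fin n)) // NoSing t} ≃
          {s : Setoid (Fin (n + 1)) // NoSing s} :=
        (setoidCongr (finSuccEquivLast (n := n)).symm).subtypeEquiv
          (fun t => noSing_setoidCongr (finSuccEquivLast (n := n)).symm t)
      have e3 : {s : Setoid (Fin (n + 1)) // NoSing s} ≃
          {P : Finpartition (univ : Finset (Fin (n + 1))) // ∀ b ∈ P.parts, 2 ≤ b.card} :=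
        (E (n + 1)).symm.subtypeEquiv (fun s => by
          rw [cond_iff_noSing]
          exact iff_of_eq (congrArg NoSing ((E (n + 1)).apply_symm_apply s)).symm)
      exact setoidSumEquiv.trans (e2.trans e3)
  rw [bell, Nat.card_congr key, Nat.card_sum, bellHat, bellHat]
end
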